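/- arXiv:1810.12491 — 7 statements merged into one kernel-verified Lean document; each statement's English description precedes it below -/
import Mathlib

section
/- Let k be a field, n ≥ 1, and let μ_1, …, μ_s be positive integers with μ_1 + … + μ_s = n. Put m^μ_0 = 0 and m^μ_i = μ_1 + … + μ_i, and for 1 ≤ j ≤ n let block(j) be the unique i with m^μ_{i−1} < j ≤ m^μ_i. Let r = max_i μ_i and for 1 ≤ t ≤ r set λ_t = #{ i : μ_i ≥ t } (so λ_1 ≥ … ≥ λ_r is the conjugate partition of μ and λ_1 + … + λ_r = n); set γ_j = λ_{j+1} + … + λ_r (so γ_0 = n and γ_r = 0), and for 1 ≤ i ≤ n let m_i be the unique j ∈ {1,…,r} with γ_j ≤ n − i < γ_{j−1}. Let A be an n×n matrix with entries in the formal power series ring k⟦x⟧ whose constant-term matrix A(0) (obtained by applying the constant-coefficient map entrywise) satisfies A(0)_{j l} = 0 whenever block(j) ≥ block(l). Write the characteristic polynomial of A as det(y·1_n − A) = y^n + b_1 y^{n−1} + … + b_n with b_i ∈ k⟦x⟧. Then x^{m_i} divides b_i in k⟦x⟧ for every 1 ≤ i ≤ n. -/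
/-!
Up to sign, `bᵢ` is the sum of the `i × i` principal minors of `A`, so it suffices to show that
`x ^ mᵢ` divides every product `∏_{j ∈ S} A (σ j) j` with `#S = i` and `σ` a permutation of `S`.
Each factor with `block j ≤ block (σ j)` has zero constant term, so the product is divisible by
`x ^ D`, `D` the number of such non-descents of `block` along `σ`. Along a cycle of `σ`, between
two visits of the same block there is a non-descent, so every block meets `S` in at most `D`
points. Hence `i ≤ ∑ᵥ min (μᵥ, D) = n - γ_D`, which says `mᵢ ≤ D`.
-/

open Finset

theorem exists_iterate_le_iterate_succ {α : Type*} (b : α → ℕ) (g : α → α) (x : α) :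
    ∃ t, b (g^[t] x) ≤ b (g^[t + 1] x) := by
  by_contra! h
  have hdesc : ∀ t, b (g^[t] x) + t ≤ b x := by
    intro t
    induction t with
    | zero => simp
    | succ t ih => linarith [h t]
  linarith [hdesc (b x + 1)]

/-- Send `j` to the first point of its forward `π`-orbit at which `b` does not strictly decrease:
on a level set of `b` this is injective. -/
theorem Equiv.Perm.card_filter_eq_le_card_filter_le_apply {β : Type*} [Fintype β]
    (π : Equiv.Perm β) (b : β → ℕ) (v : ℕ) :
    #{j | b j = v} ≤ #{j | b j ≤ b (π j)} := by
  classical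
  let c : β → ℕ := fun j => Nat.find (exists_iterate_le_iterate_succ b π j)
  have hspec : ∀ j, b (π^[c j] j) ≤ b (π (π^[c j] j)) := fun j => by
    rw [← Function.iterate_succ_apply' π]
    exact Nat.find_spec (exists_iterate_le_iterate_succ b π j)
  have hanti : ∀ j, StrictAntiOn (fun t => b (π^[t] j)) (Set.Iic (c j)) := fun j =>
    strictAntiOn_Iic_of_succ_lt fun t ht => by
      rw [Order.succ_eq_add_one]
      exact not_le.1 (Nat.find_min (exists_iterate_le_iterate_succ b π j) ht)
  refine card_le_card_of_injOn (fun j => π^[c j] j) (fun j _ => by simpa using hspec j) ?_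
  intro x hx y hy hxy
  simp only [coe_filter, mem_univ, true_and, Set.mem_ofPred_eq] at hx hy
  wlog hle : c x ≤ c y generalizing x y
  · exact (this hxy.symm hy hx (le_of_not_ge hle)).symm
  have hx' : x = π^[c y - c x] y := by
    refine Function.Injective.iterate π.injective (c x) ?_
    rw [← Function.iterate_add_apply, Nat.add_sub_cancel' hle]
    exact hxy
  rcases Nat.eq_zero_or_pos (c y - c x) with h0 | hpos
  · simpa [h0] using hx'
  · have := hanti y (Set.mem_Iic.2 (Nat.zero_le _)) (Set.mem_Iic.2 (Nat.sub_le _ _)) hpos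
    simp only [Function.iterate_zero, id_eq, ← hx', hx, hy] at this
    exact absurd this (lt_irrefl v)

theorem sum_Icc_card_filter_le_add_sum_min {ι : Type*} [Fintype ι] (μ : ι → ℕ) {r : ℕ}
    (hr : ∀ v, μ v ≤ r) (D : ℕ) :
    ∑ t ∈ Icc (D + 1) r, #{v | t ≤ μ v} + ∑ v, min (μ v) D = ∑ v, μ v := by
  classical
  simp_rw [card_filter]
  rw [sum_comm, ← sum_add_distrib]
  refine sum_congr rfl fun v _ => ?_
  rw [← card_filter, show {t ∈ Icc (D + 1) r | t ≤ μ v} = Icc (D + 1) (μ v) by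
    ext t; simp only [mem_filter, mem_Icc]; have := hr v; omega, Nat.card_Icc]
  omega

theorem pow_card_filter_dvd_prod {ι R : Type*} [Fintype ι] [CommMonoid R] (f : ι → R) (x : R)
    (p : ι → Prop) [DecidablePred p] (h : ∀ j, p j → x ∣ f j) :
    x ^ #{j | p j} ∣ ∏ j, f j := by
  rw [← prod_filter_mul_prod_filter_not univ p, ← prod_const]
  exact dvd_mul_of_dvd_left (prod_dvd_prod_of_dvd _ _ fun j hj => h j (mem_filter.1 hj).2) _

theorem Fin.sum_filter_val_lt_succ {s : ℕ} (μ : Fin s → ℕ) (v : Fin s) :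
    ∑ j ∈ univ.filter (fun j : Fin s => (j : ℕ) < v + 1), μ j =
      ∑ j ∈ univ.filter (fun j : Fin s => (j : ℕ) < v), μ j + μ v := by
  rw [show univ.filter (fun j : Fin s => (j : ℕ) < v + 1) =
      insert v (univ.filter fun j : Fin s => (j : ℕ) < v) by
    ext j; simp only [mem_filter, mem_insert, mem_univ, true_and, Fin.ext_iff]; omega,
    sum_insert (by simp), add_comm]

section Blocks

variable {n s : ℕ} {μ : Fin s → ℕ} {mμ : ℕ → ℕ} {block : Fin n → ℕ}

theorem val_mem_Ico_of_block_eq_succ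
    (hmμ : ∀ i, mμ i = ∑ j ∈ Finset.univ.filter (fun j : Fin s => (j : ℕ) < i), μ j)
    (hblock : ∀ j, block j = sInf {i : ℕ | (j : ℕ) < mμ i}) {j : Fin n} {v : Fin s}
    (hj : block j = v + 1) : (j : ℕ) ∈ Ico (mμ v) (mμ v + μ v) := by
  rw [hblock] at hj
  have hlt : (j : ℕ) < mμ (v + 1) :=
    hj ▸ Nat.sInf_mem (Nat.nonempty_of_pos_sInf (by rw [hj]; exact Nat.succ_pos _))
  have hge : ¬ (j : ℕ) < mμ v :=
    Nat.notMem_of_lt_sInf (s := {i : ℕ | (j : ℕ) < mμ i}) (by omega)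
  rw [hmμ, Fin.sum_filter_val_lt_succ, ← hmμ] at hlt
  exact mem_Ico.2 ⟨not_lt.1 hge, hlt⟩

theorem exists_block_eq_succ (hμsum : ∑ i, μ i = n)
    (hmμ : ∀ i, mμ i = ∑ j ∈ Finset.univ.filter (fun j : Fin s => (j : ℕ) < i), μ j)
    (hblock : ∀ j, block j = sInf {i : ℕ | (j : ℕ) < mμ i}) (j : Fin n) :
    ∃ v : Fin s, block j = v + 1 := by
  have hs : (j : ℕ) < mμ s := by
    rw [hmμ, filter_true_of_mem fun v _ => v.isLt, hμsum]
    exact j.isLt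
  have hle : block j ≤ s := hblock j ▸ Nat.sInf_le hs
  have hne : block j ≠ 0 := by
    intro h0
    have := Nat.sInf_mem (s := {i : ℕ | (j : ℕ) < mμ i}) ⟨s, hs⟩
    rw [← hblock, h0] at this
    simp [hmμ] at this
  exact ⟨⟨block j - 1, by omega⟩, by simp only; omega⟩

theorem card_le_sum_min_of_card_block_le (hμsum : ∑ i, μ i = n)
    (hmμ : ∀ i, mμ i = ∑ j ∈ Finset.univ.filter (fun j : Fin s => (j : ℕ) < i), μ j)
    (hblock : ∀ j, block j = sInf {i : ℕ | (j : ℕ) < mμ i})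
    {ι : Type*} [Fintype ι] {g : ι → Fin n} (hg : Function.Injective g) {D : ℕ}
    (hD : ∀ v, #{j | block (g j) = v} ≤ D) :
    Fintype.card ι ≤ ∑ v, min (μ v) D := by
  classical
  calc Fintype.card ι
      ≤ #(univ.biUnion fun v : Fin s => {j | block (g j) = v + 1}) := by
        refine card_le_card fun j _ => ?_
        obtain ⟨v, hv⟩ := exists_block_eq_succ hμsum hmμ hblock (g j)
        exact mem_biUnion.2 ⟨v, mem_univ _, by simpa using hv⟩
    _ ≤ ∑ v : Fin s, #{j | block (g j) = v + 1} := card_biUnion_le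
    _ ≤ ∑ v, min (μ v) D := by
        refine sum_le_sum fun v _ => le_min ?_ (hD _)
        calc #{j | block (g j) = v + 1}
            ≤ #(Ico (mμ v) (mμ v + μ v)) := by
              refine card_le_card_of_injOn (fun j => (g j : ℕ)) (fun j hj => ?_) ?_
              · exact val_mem_Ico_of_block_eq_succ hmμ hblock (mem_filter.1 hj).2
              · exact fun a _ b _ hab => hg (Fin.ext hab)
          _ = μ v := by simp

end Blocks

theorem stmt_0_general (k : Type*) [Field k] (n s : ℕ)
    (μ : Fin s → ℕ) (hμsum : ∑ i, μ i = n)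
    (mμ : ℕ → ℕ)
    (hmμ : ∀ i, mμ i = ∑ j ∈ Finset.univ.filter (fun j : Fin s => (j : ℕ) < i), μ j)
    (block : Fin n → ℕ)
    (hblock : ∀ j, block j = sInf {i : ℕ | (j : ℕ) < mμ i})
    (lam : ℕ → ℕ)
    (hlam : ∀ t, lam t = (Finset.univ.filter (fun i : Fin s => t ≤ μ i)).card)
    (r : ℕ) (hr : r = Finset.univ.sup μ)
    (γ : ℕ → ℕ) (hγ : ∀ j, γ j = ∑ t ∈ Finset.Icc (j + 1) r, lam t)
    (m : ℕ → ℕ) (hm : ∀ i, m i = sInf {j : ℕ | γ j ≤ n - i})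
    (A : Matrix (Fin n) (Fin n) (PowerSeries k))
    (hA : ∀ j l : Fin n, block l ≤ block j → PowerSeries.constantCoeff (R := k) (A j l) = 0)
    (i : ℕ) (hin : i ≤ n) :
    (PowerSeries.X : PowerSeries k) ^ m i ∣ A.charpoly.coeff (n - i) := by
  classical
  have hγ_add : ∀ D, γ D + ∑ v, min (μ v) D = n := fun D => by
    simp only [hγ, hlam, ← hμsum]
    exact sum_Icc_card_filter_le_add_sum_min μ (fun v => hr ▸ le_sup (mem_univ v)) D
  have hminors := A.charpoly_coeff_eq_sum_minors i (by simpa using hin)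
  rw [Fintype.card_fin] at hminors
  rw [hminors]
  refine dvd_mul_of_dvd_right (dvd_sum fun S hS => ?_) _
  rw [Matrix.det_apply']
  refine dvd_sum fun σ _ => dvd_mul_of_dvd_right ?_ _
  set D := #{j : S | block j ≤ block (σ j)}
  have hprod : PowerSeries.X ^ D ∣ ∏ j, A.submatrix Subtype.val Subtype.val (σ j) j :=
    pow_card_filter_dvd_prod _ _ (fun j : S => block j ≤ block (σ j)) fun j hj =>
      PowerSeries.X_dvd_iff.2 (hA _ _ hj)
  have hmD : m i ≤ D := by
    have hcard : i ≤ ∑ v, min (μ v) D := by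
      rw [← (mem_powersetCard.1 hS).2, ← Fintype.card_coe]
      exact card_le_sum_min_of_card_block_le hμsum hmμ hblock Subtype.val_injective
        fun v => σ.card_filter_eq_le_card_filter_le_apply (fun j => block j) v
    rw [hm]
    exact Nat.sInf_le (show γ D ≤ n - i by have := hγ_add D; omega)
  exact (pow_dvd_pow _ hmD).trans hprod

/-- Local form of Lemma 2.1 ('inclusion'): if the constant-term matrix of
`A ∈ Mₙ(k⟦x⟧)` is strictly upper-triangular with respect to the block structure of the
composition `μ` (i.e. `A(0)_{jl} = 0` whenever `block(j) ≥ block(l)`), then the coefficient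
`bᵢ` of `y^{n-i}` in `det(y·1ₙ - A)` is divisible by `x^{mᵢ}`, where `mᵢ` is determined by
the conjugate partition `λ` of `μ` via `γ_{mᵢ} ≤ n - i < γ_{mᵢ - 1}`. -/
theorem stmt_0 (k : Type*) [Field k] (n s : ℕ) (hn : 1 ≤ n)
    (μ : Fin s → ℕ) (hμpos : ∀ i, 0 < μ i) (hμsum : ∑ i, μ i = n)
    (mμ : ℕ → ℕ)
    (hmμ : ∀ i, mμ i = ∑ j ∈ Finset.univ.filter (fun j : Fin s => (j : ℕ) < i), μ j)
    (block : Fin n → ℕ)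
    (hblock : ∀ j, block j = sInf {i : ℕ | (j : ℕ) < mμ i})
    (lam : ℕ → ℕ)
    (hlam : ∀ t, lam t = (Finset.univ.filter (fun i : Fin s => t ≤ μ i)).card)
    (r : ℕ) (hr : r = Finset.univ.sup μ)
    (γ : ℕ → ℕ) (hγ : ∀ j, γ j = ∑ t ∈ Finset.Icc (j + 1) r, lam t)
    (m : ℕ → ℕ) (hm : ∀ i, m i = sInf {j : ℕ | γ j ≤ n - i})
    (A : Matrix (Fin n) (Fin n) (PowerSeries k))
    (hA : ∀ j l : Fin n, block l ≤ block j → PowerSeries.constantCoeff (R := k) (A j l) = 0)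
    (i : ℕ) (hi1 : 1 ≤ i) (hin : i ≤ n) :
    (PowerSeries.X : PowerSeries k) ^ m i ∣ A.charpoly.coeff (n - i) :=
  stmt_0_general k n s μ hμsum mμ hmμ block hblock lam hlam r hr γ hγ m hm A hA i hin
end

section
/- Let k be a field, s ≥ 2, and let η_1 ≥ η_2 ≥ … ≥ η_{s−1} > η_s be positive integers; set γ_i = η_{i+1} + … + η_s for 0 ≤ i ≤ s. Suppose f ∈ k⟦x,y⟧ has the form f = y^{γ_0} + Σ_{i=1}^{s} a_i·x^i·y^{γ_i} with every a_i a unit of k⟦x,y⟧ (that is, f ∈ P_η^0). Then f factors as f = g·h, where g = y^{γ_0−γ_{s−1}} + Σ_{i=1}^{s−1} b_i·x^i·y^{γ_i−γ_{s−1}} for some units b_1, …, b_{s−1} of k⟦x,y⟧, and h = y^{γ_{s−1}} + c·x for some unit c of k⟦x,y⟧. -/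
/-!
Write `x = X 0`, `y = X 1` and `m = s - 1`. For `g = Σ_{i ≤ m} bᵢ xⁱ y^(γᵢ - γₘ)` with
`b₀ = 1` and `h = y^γₘ + c x`, comparing coefficients of `xⁱ` shows that `f = g h` amounts to
the recursion `b_{i+1} = a_{i+1} - c bᵢ y^(η_{i+1} - η_s)` together with the terminal condition
`c bₘ = a_s`. Substituting `c = u⁻¹` turns the terminal condition into a monic polynomial
equation in `u`, which modulo the maximal ideal reads `uᵐ (u - aₘ(0) / a_s(0)) = 0` because
`ηₘ > η_s`. Its root `aₘ(0) / a_s(0)` is simple and nonzero, so it lifts to a unit root by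
Hensel's lemma in the complete ring `k⟦x,y⟧`. The `bᵢ` are units since they agree with the
`aᵢ` modulo the maximal ideal.
-/

open Finset IsLocalRing

namespace MvPowerSeries

variable {σ R : Type*} [CommRing R]

theorem mem_span_X_image_of_coeff_eq_zero (S : Finset σ) (f : MvPowerSeries σ R)
    (hf : ∀ d : σ →₀ ℕ, (∀ i ∈ S, d i = 0) → coeff d f = 0) :
    f ∈ Ideal.span (X '' ↑S) := by
  classical
  induction S using Finset.induction_on generalizing f with
  | empty => simp [show f = 0 from ext fun d => by simpa using hf d]
  | insert j S _ ih =>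
    let f₀ : MvPowerSeries σ R := fun d => if d j = 0 then coeff d f else 0
    have hf₀ : ∀ d, coeff d f₀ = if d j = 0 then coeff d f else 0 := fun _ => rfl
    obtain ⟨g, hg⟩ : X j ∣ f - f₀ := X_dvd_iff.mpr fun d hd => by simp [hf₀, hd]
    have hf₀S : f₀ ∈ Ideal.span (X '' ↑S) := ih f₀ fun d hd => by
      rw [hf₀]
      split_ifs with hdj
      · exact hf d (forall_mem_insert _ _ _ |>.mpr ⟨hdj, hd⟩)
      · rfl
    rw [← sub_add_cancel f f₀, hg, coe_insert, Set.image_insert_eq]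
    exact Ideal.add_mem _ (Ideal.mul_mem_right _ _ (Ideal.subset_span (Set.mem_insert _ _)))
      (Ideal.span_mono (Set.subset_insert _ _) hf₀S)

theorem ker_constantCoeff [Finite σ] :
    RingHom.ker (constantCoeff : MvPowerSeries σ R →+* R) = Ideal.span (Set.range X) := by
  have := Fintype.ofFinite σ
  refine le_antisymm (fun f hf => ?_) (Ideal.span_le.mpr ?_)
  · rw [← Set.image_univ, ← coe_univ]
    refine mem_span_X_image_of_coeff_eq_zero _ f fun d hd => ?_
    rw [show d = 0 from Finsupp.ext fun i => hd i (mem_univ i)]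
    exact hf
  · rintro _ ⟨i, rfl⟩
    simp

theorem maximalIdeal_eq_span_range_X {k : Type*} [Field k] [Finite σ] :
    maximalIdeal (MvPowerSeries σ k) = Ideal.span (Set.range X) := by
  ext f
  rw [← ker_constantCoeff, mem_maximalIdeal, mem_nonunits_iff, isUnit_iff_constantCoeff,
    isUnit_iff_ne_zero, not_not, RingHom.mem_ker]

instance {k : Type*} [Field k] [Finite σ] : HenselianLocalRing (MvPowerSeries σ k) where
  is_henselian f hf a₀ h₁ h₂ := by
    -- `MvPowerSeries σ k` is adically complete, hence Henselian, at the ideal of the variables.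
    rw [maximalIdeal_eq_span_range_X] at h₁ ⊢
    exact HenselianRing.is_henselian f hf a₀ h₁ (h₂.map _)

theorem X_mem_maximalIdeal {k : Type*} [Field k] [Finite σ] (i : σ) :
    X i ∈ maximalIdeal (MvPowerSeries σ k) := by
  rw [maximalIdeal_eq_span_range_X]
  exact Ideal.subset_span ⟨i, rfl⟩

end MvPowerSeries

section

variable {R : Type*} [CommRing R]

theorem IsLocalRing.isUnit_sub_of_mem_maximalIdeal [IsLocalRing R] {a r : R} (ha : IsUnit a)
    (hr : r ∈ maximalIdeal R) : IsUnit (a - r) :=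
  (isUnit_or_isUnit_of_isUnit_add (by rwa [sub_add_cancel])).resolve_right
    ((mem_maximalIdeal r).mp hr)

section Splitting

open Polynomial

/-- For a unit `c`, `c ^ i * (splittingPoly a w i).eval c⁻¹` is the solution `b i` of
`b 0 = 1`, `b (i + 1) = a (i + 1) - c * b i * w (i + 1)`. -/
noncomputable def splittingPoly (a w : ℕ → R) : ℕ → R[X]
  | 0 => 1
  | i + 1 => C (a (i + 1)) * X ^ (i + 1) - C (w (i + 1)) * splittingPoly a w i

theorem natDegree_splittingPoly_le (a w : ℕ → R) (i : ℕ) :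
    (splittingPoly a w i).natDegree ≤ i := by
  induction i with
  | zero => simp [splittingPoly]
  | succ i ih =>
    refine (natDegree_sub_le _ _).trans (max_le (natDegree_C_mul_X_pow_le _ _) ?_)
    exact natDegree_C_mul_le _ _ |>.trans (ih.trans i.le_succ)

theorem HenselianLocalRing.exists_splitting_coeffs [HenselianLocalRing R] {m : ℕ} (hm : m ≠ 0)
    {a : ℕ → R} (w : ℕ → R) (ham : IsUnit (a m)) (ham₁ : IsUnit (a (m + 1)))
    (hw : w m ∈ maximalIdeal R) :
    ∃ c : R, ∃ b : ℕ → R, IsUnit c ∧ b 0 = 1 ∧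
      (∀ i, b (i + 1) = a (i + 1) - c * b i * w (i + 1)) ∧ a (m + 1) = c * b m := by
  obtain ⟨A, hA⟩ := ham₁
  set G : R[X] := X ^ (m + 1) - C (↑A⁻¹ : R) * splittingPoly a w m
  have hG : G.Monic := by
    refine monic_X_pow_sub (degree_le_natDegree.trans_lt ?_)
    exact_mod_cast (natDegree_C_mul_le _ _).trans_lt
      ((natDegree_splittingPoly_le a w m).trans_lt m.lt_succ_self)
  set t := residue R (a m * ↑A⁻¹)
  have ht : t ≠ 0 := (residue_ne_zero_iff_isUnit _).mpr (ham.mul A⁻¹.isUnit)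
  have hGt : G.map (residue R) = X ^ m * (X - C t) := by
    obtain ⟨n, rfl⟩ : ∃ n, m = n + 1 := ⟨m - 1, by omega⟩
    simp only [G, t, splittingPoly, Polynomial.map_sub, Polynomial.map_pow, map_X,
      Polynomial.map_mul, map_C, map_units_inv, (residue_eq_zero_iff _).mpr hw, map_zero,
      zero_mul, sub_zero, map_mul]
    ring
  have haeval : ∀ p : R[X], aeval t p = (p.map (residue R)).eval t := fun p => by
    rw [aeval_def, eval₂_eq_eval_map, ResidueField.algebraMap_eq]
  have hensel := ((HenselianLocalRing.TFAE R).out 0 1).mp ‹_›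
  obtain ⟨u, hu, hut⟩ := hensel G hG t
    (by simp [haeval, hGt]) (by simp [haeval, ← derivative_map, hGt, derivative_mul, ht])
  obtain ⟨U, rfl⟩ := (residue_ne_zero_iff_isUnit u).mp (hut ▸ ht)
  refine ⟨↑U⁻¹, fun i => ↑U⁻¹ ^ i * (splittingPoly a w i).eval ↑U, U⁻¹.isUnit,
    by simp [splittingPoly], fun i => ?_, ?_⟩
  · have hUi : (↑U⁻¹ : R) ^ (i + 1) * ↑U ^ (i + 1) = 1 := by
      rw [← mul_pow, U.inv_mul, one_pow]
    simp only [splittingPoly, eval_sub, eval_mul, eval_C, eval_pow, eval_X]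
    linear_combination a (i + 1) * hUi
  · have hroot : (U : R) ^ (m + 1) = ↑A⁻¹ * (splittingPoly a w m).eval ↑U := by
      simpa [G, sub_eq_zero] using hu
    have hUi : (↑U⁻¹ : R) ^ (m + 1) * ↑U ^ (m + 1) = 1 := by
      rw [← mul_pow, U.inv_mul, one_pow]
    have hAi : (↑A : R) * ↑A⁻¹ = 1 := A.mul_inv
    rw [← hA]
    linear_combination (-↑A : R) * hUi + (↑U⁻¹ : R) ^ (m + 1) * ↑A * hroot
      + (↑U⁻¹ : R) ^ (m + 1) * (splittingPoly a w m).eval ↑U * hAi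

end Splitting

theorem sum_Icc_one_eq_sum_range {M : Type*} [AddCommMonoid M] (f : ℕ → M) (n : ℕ) :
    ∑ i ∈ Icc 1 n, f i = ∑ i ∈ range n, f (i + 1) := by
  rw [range_eq_Ico, sum_Ico_add', zero_add, Ico_add_one_right_eq_Icc]

theorem sum_mul_pow_add_mul_eq (x y c : R) (m : ℕ) (γ : ℕ → ℕ) (a b : ℕ → R)
    (hγ : ∀ i ≤ m, γ m ≤ γ i) (hγ_succ : γ (m + 1) = 0)
    (hrec : ∀ i < m, a (i + 1) * y ^ γ (i + 1) =
      b (i + 1) * y ^ γ (i + 1) + c * b i * y ^ (γ i - γ m))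
    (hlast : a (m + 1) = c * b m) :
    (∑ i ∈ range (m + 1), b i * x ^ i * y ^ (γ i - γ m)) * (y ^ γ m + c * x) =
      b 0 * y ^ γ 0 + ∑ i ∈ range (m + 1), a (i + 1) * x ^ (i + 1) * y ^ γ (i + 1) := by
  have hT : ∀ i ∈ range (m + 1),
      b i * x ^ i * y ^ (γ i - γ m) * y ^ γ m = b i * x ^ i * y ^ γ i := fun i hi => by
    rw [mul_assoc, ← pow_add, Nat.sub_add_cancel (hγ i (mem_range_succ_iff.mp hi))]
  have hS : ∀ i ∈ range (m + 1), b i * x ^ i * y ^ (γ i - γ m) * (c * x) =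
      c * b i * x ^ (i + 1) * y ^ (γ i - γ m) := fun i _ => by ring
  have ha : ∀ i ∈ range m, a (i + 1) * x ^ (i + 1) * y ^ γ (i + 1) =
      b (i + 1) * x ^ (i + 1) * y ^ γ (i + 1) + c * b i * x ^ (i + 1) * y ^ (γ i - γ m) :=
    fun i hi => by linear_combination x ^ (i + 1) * hrec i (mem_range.mp hi)
  rw [mul_add, sum_mul, sum_congr rfl hT, sum_mul, sum_congr rfl hS, sum_range_succ' _ m,
    sum_range_succ _ m, sum_range_succ _ m, sum_congr rfl ha, sum_add_distrib, hγ_succ, hlast,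
    Nat.sub_self, pow_zero]
  ring

theorem pow_add_sum_eq_mul_of_rec (x y c : R) (m : ℕ) (η γ : ℕ → ℕ)
    (hγ : ∀ i, γ i = ∑ t ∈ Icc (i + 1) (m + 1), η t)
    (hη : ∀ i ∈ Icc 1 m, η (m + 1) ≤ η i)
    (a b : ℕ → R) (hb0 : b 0 = 1)
    (hb : ∀ i, b (i + 1) = a (i + 1) - c * b i * y ^ (η (i + 1) - η (m + 1)))
    (hcb : a (m + 1) = c * b m) :
    y ^ γ 0 + ∑ i ∈ Icc 1 (m + 1), a i * x ^ i * y ^ γ i =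
      (y ^ (γ 0 - γ m) + ∑ i ∈ Icc 1 m, b i * x ^ i * y ^ (γ i - γ m)) *
        (y ^ γ m + c * x) := by
  have hγ_step : ∀ i ≤ m, γ i = η (i + 1) + γ (i + 1) := fun i hi => by
    rw [hγ, hγ, ← insert_Icc_add_one_left_eq_Icc (by omega : i + 1 ≤ m + 1),
      sum_insert (by simp)]
  have hγ_top : γ (m + 1) = 0 := by simp [hγ]
  have hγ_anti : ∀ i ≤ m, γ m ≤ γ i := fun i hi => by
    rw [hγ, hγ]
    exact sum_le_sum_of_subset (Icc_subset_Icc (by omega) le_rfl)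
  have hrec : ∀ i < m, a (i + 1) * y ^ γ (i + 1) =
      b (i + 1) * y ^ γ (i + 1) + c * b i * y ^ (γ i - γ m) := fun i hi => by
    have := hη (i + 1) (mem_Icc.mpr ⟨by omega, by omega⟩)
    rw [hb i, show γ i - γ m = (η (i + 1) - η (m + 1)) + γ (i + 1) by
      rw [hγ_step i hi.le, hγ_step m le_rfl, hγ_top]; omega, pow_add]
    ring
  have hg : y ^ (γ 0 - γ m) + ∑ i ∈ Icc 1 m, b i * x ^ i * y ^ (γ i - γ m) =
      ∑ i ∈ range (m + 1), b i * x ^ i * y ^ (γ i - γ m) := by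
    rw [sum_range_succ', hb0, sum_Icc_one_eq_sum_range, pow_zero, one_mul, one_mul, add_comm]
  rw [hg, sum_mul_pow_add_mul_eq x y c m γ a b hγ_anti hγ_top hrec hcb, hb0, one_mul,
    sum_Icc_one_eq_sum_range]

theorem HenselianLocalRing.exists_factorization [HenselianLocalRing R] (x y : R)
    (hy : y ∈ maximalIdeal R) {m : ℕ} (hm : m ≠ 0) (η γ : ℕ → ℕ)
    (hγ : ∀ i, γ i = ∑ t ∈ Icc (i + 1) (m + 1), η t)
    (hη : ∀ i ∈ Icc 1 m, η (m + 1) < η i)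
    (a : ℕ → R) (ha : ∀ i ∈ Icc 1 (m + 1), IsUnit (a i)) :
    ∃ (b : ℕ → R) (c : R), (∀ i ∈ Icc 1 m, IsUnit (b i)) ∧ IsUnit c ∧
      y ^ γ 0 + ∑ i ∈ Icc 1 (m + 1), a i * x ^ i * y ^ γ i =
        (y ^ (γ 0 - γ m) + ∑ i ∈ Icc 1 m, b i * x ^ i * y ^ (γ i - γ m)) *
          (y ^ γ m + c * x) := by
  have hw : ∀ i ∈ Icc 1 m, y ^ (η i - η (m + 1)) ∈ maximalIdeal R := fun i hi =>
    Ideal.pow_mem_of_mem _ hy _ (Nat.sub_pos_of_lt (hη i hi))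
  have hm_mem : m ∈ Icc 1 m := mem_Icc.mpr ⟨Nat.one_le_iff_ne_zero.mpr hm, le_rfl⟩
  obtain ⟨c, b, hc, hb0, hb, hcb⟩ :=
    exists_splitting_coeffs hm (fun i => y ^ (η i - η (m + 1)))
      (ha m (Icc_subset_Icc_right m.le_succ hm_mem)) (ha (m + 1) (by simp)) (hw m hm_mem)
  refine ⟨b, c, fun i hi => ?_, hc,
    pow_add_sum_eq_mul_of_rec x y c m η γ hγ (fun i hi => (hη i hi).le) a b hb0 hb hcb⟩
  obtain ⟨j, rfl⟩ : ∃ j, i = j + 1 := ⟨i - 1, by have := (mem_Icc.mp hi).1; omega⟩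
  rw [hb]
  exact isUnit_sub_of_mem_maximalIdeal (ha _ (Icc_subset_Icc_right m.le_succ hi))
    (Ideal.mul_mem_left _ _ (hw _ hi))

end

open MvPowerSeries

theorem stmt_1_general (k : Type*) [Field k] (s : ℕ) (hs : 2 ≤ s)
    (η : ℕ → ℕ)
    (hηanti : ∀ i ∈ Finset.Icc 1 (s - 1), ∀ j ∈ Finset.Icc 1 (s - 1), i ≤ j → η j ≤ η i)
    (hηlast : η s < η (s - 1))
    (γ : ℕ → ℕ) (hγ : ∀ i, γ i = ∑ t ∈ Finset.Icc (i + 1) s, η t)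
    (a : ℕ → MvPowerSeries (Fin 2) k) (ha : ∀ i ∈ Finset.Icc 1 s, IsUnit (a i))
    (f : MvPowerSeries (Fin 2) k)
    (hf : f = (X 1 : MvPowerSeries (Fin 2) k) ^ γ 0
      + ∑ i ∈ Finset.Icc 1 s, a i * (X 0 : MvPowerSeries (Fin 2) k) ^ i
          * (X 1 : MvPowerSeries (Fin 2) k) ^ γ i) :
    ∃ (b : ℕ → MvPowerSeries (Fin 2) k) (c : MvPowerSeries (Fin 2) k),
      (∀ i ∈ Finset.Icc 1 (s - 1), IsUnit (b i)) ∧ IsUnit c ∧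
      f = ((X 1 : MvPowerSeries (Fin 2) k) ^ (γ 0 - γ (s - 1))
            + ∑ i ∈ Finset.Icc 1 (s - 1), b i * (X 0 : MvPowerSeries (Fin 2) k) ^ i
                * (X 1 : MvPowerSeries (Fin 2) k) ^ (γ i - γ (s - 1)))
          * ((X 1 : MvPowerSeries (Fin 2) k) ^ γ (s - 1) + c * (X 0 : MvPowerSeries (Fin 2) k)) := by
  obtain ⟨m, rfl⟩ : ∃ m, s = m + 1 := ⟨s - 1, by omega⟩
  rw [Nat.add_sub_cancel] at hηanti hηlast ⊢
  have hη : ∀ i ∈ Icc 1 m, η (m + 1) < η i := fun i hi =>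
    hηlast.trans_le (hηanti i hi m (right_mem_Icc.mpr (by omega)) (mem_Icc.mp hi).2)
  rw [hf]
  exact HenselianLocalRing.exists_factorization (X 0) (X 1) (X_mem_maximalIdeal 1) (by omega)
    η γ hγ hη a ha

/-- The inductive splitting step of the factorization lemma: if
`f = y^{γ₀} + Σ_{i=1}^{s} aᵢ xⁱ y^{γᵢ} ∈ P_η⁰` with `η₁ ≥ … ≥ η_{s-1} > η_s`, then
`f = g·h` with `g ∈ P_{(η₁,…,η_{s-1})}⁰` and `h = y^{γ_{s-1}} + c·x`, `c` a unit. -/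
theorem stmt_1 (k : Type*) [Field k] (s : ℕ) (hs : 2 ≤ s)
    (η : ℕ → ℕ) (hηpos : ∀ i ∈ Finset.Icc 1 s, 0 < η i)
    (hηanti : ∀ i ∈ Finset.Icc 1 (s - 1), ∀ j ∈ Finset.Icc 1 (s - 1), i ≤ j → η j ≤ η i)
    (hηlast : η s < η (s - 1))
    (γ : ℕ → ℕ) (hγ : ∀ i, γ i = ∑ t ∈ Finset.Icc (i + 1) s, η t)
    (a : ℕ → MvPowerSeries (Fin 2) k) (ha : ∀ i ∈ Finset.Icc 1 s, IsUnit (a i))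
    (f : MvPowerSeries (Fin 2) k)
    (hf : f = (X 1 : MvPowerSeries (Fin 2) k) ^ γ 0
      + ∑ i ∈ Finset.Icc 1 s, a i * (X 0 : MvPowerSeries (Fin 2) k) ^ i
          * (X 1 : MvPowerSeries (Fin 2) k) ^ γ i) :
    ∃ (b : ℕ → MvPowerSeries (Fin 2) k) (c : MvPowerSeries (Fin 2) k),
      (∀ i ∈ Finset.Icc 1 (s - 1), IsUnit (b i)) ∧ IsUnit c ∧
      f = ((X 1 : MvPowerSeries (Fin 2) k) ^ (γ 0 - γ (s - 1))
            + ∑ i ∈ Finset.Icc 1 (s - 1), b i * (X 0 : MvPowerSeries (Fin 2) k) ^ i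
                * (X 1 : MvPowerSeries (Fin 2) k) ^ (γ i - γ (s - 1)))
          * ((X 1 : MvPowerSeries (Fin 2) k) ^ γ (s - 1) + c * (X 0 : MvPowerSeries (Fin 2) k)) :=
  stmt_1_general k s hs η hηanti hηlast γ hγ a ha f hf
end

section
/- Let k be a field and let η_1 > η_2 > … > η_s be strictly decreasing positive integers. Suppose c_1, …, c_s and c'_1, …, c'_s are units of k⟦x,y⟧ such that ∏_{i=1}^{s} (y^{η_i} + c_i·x) = ∏_{i=1}^{s} (y^{η_i} + c'_i·x) in k⟦x,y⟧. Then for every i the elements y^{η_i} + c_i·x and y^{η_i} + c'_i·x are associates in k⟦x,y⟧ (they generate the same ideal); in particular the constant coefficients of c_i and c'_i are equal. -/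
/-!
Write `k⟦x,y⟧ = A⟦x⟧` with `A = k⟦y⟧`. Each factor `y ^ η + c * x` has constant term `y ^ η` in the
maximal ideal of the complete ring `A` and unit linear coefficient `c(0, y)`, so Weierstrass division
by it leaves constant remainders in `A`; as `A` is a domain the factor is prime. Hence each factor on
the left is associated to one on the right. Setting `x = 0` shows that associated factors have the
same `η`, hence the same index, and comparing coefficients of `x` modulo `y` then gives
`c_i(0,0) = c'_i(0,0)`.
-/

namespace PowerSeries

variable {A : Type*} [CommRing A] {t : A} {m n : ℕ} {u u' : A⟦X⟧}

theorem prime_of_constantCoeff_mem_of_isUnit_coeff_one [IsDomain A] {I : Ideal A}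
    [IsAdicComplete I A] {g : A⟦X⟧} (h0 : constantCoeff g ∈ I) (h1 : IsUnit (coeff 1 g)) :
    Prime g := by
  have hI : I ≠ ⊤ := by
    rintro rfl
    exact not_subsingleton A ‹IsAdicComplete ⊤ A›.subsingleton
  have hcoeff1 : coeff 1 g ∉ I := fun h => hI (Ideal.eq_top_of_isUnit_mem I h h1)
  have horder : (g.map (Ideal.Quotient.mk I)).order.toNat = 1 := by
    rw [(order_eq_nat (n := 1)).mpr]
    · rfl
    refine ⟨by simpa [Ideal.Quotient.eq_zero_iff_mem] using hcoeff1, fun i hi => ?_⟩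
    obtain rfl : i = 0 := by omega
    simpa [Ideal.Quotient.eq_zero_iff_mem] using h0
  have H : g.IsWeierstrassDivisorAt I := by
    rwa [IsWeierstrassDivisorAt, horder]
  have hdiv (f : A⟦X⟧) : ∃ q a, f = g * q + C a := by
    obtain ⟨hdeg, heq⟩ := H.isWeierstrassDivisionAt_div_mod f
    rw [horder, Nat.cast_one, Nat.WithBot.lt_one_iff_le_zero, Polynomial.degree_le_zero_iff] at hdeg
    exact ⟨_, _, by rwa [hdeg, Polynomial.coe_C] at heq⟩
  have hrem {q : A⟦X⟧} {a : A} (h : g * q = C a) : a = 0 := by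
    have hdeg : (Polynomial.C a).degree < (g.map (Ideal.Quotient.mk I)).order.toNat := by
      rw [horder]
      exact Polynomial.degree_C_le.trans_lt (by norm_num)
    simpa using (H.eq_zero_of_mul_eq hdeg (by rwa [Polynomial.coe_C])).2
  refine ⟨fun h => h1.ne_zero (by simp [h]),
    fun hu => hI (Ideal.eq_top_of_isUnit_mem I h0 (hu.map _)), ?_⟩
  rintro f₁ f₂ ⟨q, hq⟩
  obtain ⟨q₁, a₁, rfl⟩ := hdiv f₁
  obtain ⟨q₂, a₂, rfl⟩ := hdiv f₂
  have ha : a₁ * a₂ = 0 := hrem (q := q - g * q₁ * q₂ - q₁ * C a₂ - q₂ * C a₁) <| by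
    rw [map_mul]
    linear_combination -hq
  rcases mul_eq_zero.mp ha with rfl | rfl
  · exact .inl (by simp)
  · exact .inr (by simp)

theorem constantCoeff_C_pow_add_mul_X : constantCoeff (C t ^ n + u * X) = t ^ n := by
  simp

theorem coeff_one_C_pow_add_mul_X : coeff 1 (C t ^ n + u * X) = constantCoeff u := by
  simp [← map_pow]

theorem prime_C_pow_add_mul_X [IsDomain A] {I : Ideal A} [IsAdicComplete I A] (ht : t ∈ I)
    (hn : 0 < n) (hu : IsUnit u) : Prime (C t ^ n + u * X) := by
  refine prime_of_constantCoeff_mem_of_isUnit_coeff_one (I := I) ?_ ?_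
  · rw [constantCoeff_C_pow_add_mul_X]
    exact I.pow_mem_of_mem ht n hn
  · rw [coeff_one_C_pow_add_mul_X]
    exact hu.map constantCoeff

theorem eq_of_associated_C_pow_add_mul_X [IsDomain A] (ht0 : t ≠ 0) (ht : ¬IsUnit t)
    (h : Associated (C t ^ m + u * X) (C t ^ n + u' * X)) : m = n := by
  have h' := h.map constantCoeff
  simp only [constantCoeff_C_pow_add_mul_X] at h'
  exact le_antisymm ((pow_dvd_pow_iff ht0 ht).mp h'.dvd) ((pow_dvd_pow_iff ht0 ht).mp h'.symm.dvd)

theorem pow_dvd_constantCoeff_sub_of_associated_C_pow_add_mul_X [IsDomain A] (ht0 : t ≠ 0)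
    (h : Associated (C t ^ n + u * X) (C t ^ n + u' * X)) :
    t ^ n ∣ constantCoeff u' - constantCoeff u := by
  obtain ⟨v, hv⟩ := h
  have hv0 : constantCoeff (v : A⟦X⟧) = 1 := by
    have := congrArg constantCoeff hv
    simp only [map_mul, constantCoeff_C_pow_add_mul_X] at this
    exact (mul_eq_left₀ (pow_ne_zero n ht0)).mp this
  have hv1 := congrArg (coeff 1) hv
  rw [coeff_one_C_pow_add_mul_X, add_mul, mul_right_comm, map_add, ← map_pow, coeff_C_mul,
    coeff_succ_mul_X, coeff_zero_eq_constantCoeff_apply, map_mul, hv0, mul_one] at hv1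
  exact ⟨coeff 1 (v : A⟦X⟧), by rw [← hv1]; ring⟩

end PowerSeries

namespace MvPowerSeries

variable {σ R : Type*}

instance [CommRing R] [IsDomain R] : IsDomain (MvPowerSeries σ R) :=
  NoZeroDivisors.to_isDomain _

theorem X_ne_zero [Semiring R] [Nontrivial R] (s : σ) : (X s : MvPowerSeries σ R) ≠ 0 :=
  fun h => by simpa using congrArg (coeff (Finsupp.single s 1)) h

theorem not_isUnit_X [CommSemiring R] [Nontrivial R] (s : σ) :
    ¬IsUnit (X s : MvPowerSeries σ R) :=
  fun h => by simpa using h.map constantCoeff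

theorem constantCoeff_constantCoeff_finSuccEquiv [CommSemiring R] {n : ℕ}
    (p : MvPowerSeries (Fin (n + 1)) R) :
    constantCoeff (PowerSeries.constantCoeff (finSuccEquiv R n p)) = constantCoeff p := by
  simpa using coeff_coeff_finSuccEquiv p (k := 0) (x := 0)

theorem finSuccEquiv_X_one_pow_add_mul_X_zero [CommSemiring R] (n : ℕ)
    (b : MvPowerSeries (Fin 2) R) :
    finSuccEquiv R 1 (X 1 ^ n + b * X 0) =
      PowerSeries.C (X 0) ^ n + finSuccEquiv R 1 b * PowerSeries.X := by
  rw [map_add, map_mul, map_pow, finSuccEquiv_X_zero, ← Fin.succ_zero_eq_one, finSuccEquiv_X_succ]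

theorem prime_X_one_pow_add_mul_X_zero [CommRing R] [IsDomain R] {n : ℕ} (hn : 0 < n)
    {b : MvPowerSeries (Fin 2) R} (hb : IsUnit b) : Prime (X 1 ^ n + b * X 0) := by
  rw [← MulEquiv.prime_iff (finSuccEquiv R 1), finSuccEquiv_X_one_pow_add_mul_X_zero]
  exact PowerSeries.prime_C_pow_add_mul_X (I := Ideal.span (Set.range X))
    (Ideal.subset_span ⟨0, rfl⟩) hn (hb.map _)

end MvPowerSeries

open MvPowerSeries

/-- Uniqueness part of the factorization lemma: for strictly decreasing `η₁ > … > η_s`,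
if `∏ᵢ (y^{ηᵢ} + cᵢ·x) = ∏ᵢ (y^{ηᵢ} + c'ᵢ·x)` with all `cᵢ, c'ᵢ` units, then for each `i`
the factors `y^{ηᵢ} + cᵢ·x` and `y^{ηᵢ} + c'ᵢ·x` are associates, and the constant
coefficients of `cᵢ` and `c'ᵢ` coincide. -/
theorem stmt_3 (k : Type*) [Field k] (s : ℕ)
    (η : ℕ → ℕ) (hηpos : ∀ i ∈ Finset.Icc 1 s, 0 < η i)
    (hηstrict : ∀ i ∈ Finset.Icc 1 s, ∀ j ∈ Finset.Icc 1 s, i < j → η j < η i)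
    (c c' : ℕ → MvPowerSeries (Fin 2) k)
    (hc : ∀ i ∈ Finset.Icc 1 s, IsUnit (c i)) (hc' : ∀ i ∈ Finset.Icc 1 s, IsUnit (c' i))
    (heq : ∏ i ∈ Finset.Icc 1 s,
        ((X 1 : MvPowerSeries (Fin 2) k) ^ η i + c i * (X 0 : MvPowerSeries (Fin 2) k))
      = ∏ i ∈ Finset.Icc 1 s,
        ((X 1 : MvPowerSeries (Fin 2) k) ^ η i + c' i * (X 0 : MvPowerSeries (Fin 2) k))) :
    ∀ i ∈ Finset.Icc 1 s,
      Associated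
        ((X 1 : MvPowerSeries (Fin 2) k) ^ η i + c i * (X 0 : MvPowerSeries (Fin 2) k))
        ((X 1 : MvPowerSeries (Fin 2) k) ^ η i + c' i * (X 0 : MvPowerSeries (Fin 2) k))
      ∧ constantCoeff (c i) = constantCoeff (c' i) := by
  intro i hi
  have hprime := prime_X_one_pow_add_mul_X_zero (hηpos i hi) (hc i hi)
  obtain ⟨j, hj, hdvd⟩ := hprime.exists_mem_finset_dvd (heq ▸ Finset.dvd_prod_of_mem _ hi)
  have hassoc := hprime.associated_of_dvd
    (prime_X_one_pow_add_mul_X_zero (hηpos j hj) (hc' j hj)) hdvd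
  have hassoc' := hassoc.map (finSuccEquiv k 1)
  simp only [finSuccEquiv_X_one_pow_add_mul_X_zero] at hassoc'
  have hηij := PowerSeries.eq_of_associated_C_pow_add_mul_X (X_ne_zero 0) (not_isUnit_X 0) hassoc'
  obtain rfl : i = j := by
    rcases lt_trichotomy i j with h | h | h
    · exact absurd hηij (hηstrict i hi j hj h).ne'
    · exact h
    · exact absurd hηij (hηstrict j hj i hi h).ne
  refine ⟨hassoc, ?_⟩
  obtain ⟨w, hw⟩ :=
    PowerSeries.pow_dvd_constantCoeff_sub_of_associated_C_pow_add_mul_X (X_ne_zero 0) hassoc'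
  have hconst := congrArg constantCoeff hw
  rw [map_sub, constantCoeff_constantCoeff_finSuccEquiv,
    constantCoeff_constantCoeff_finSuccEquiv, map_mul, map_pow, constantCoeff_X,
    zero_pow (hηpos i hi).ne', zero_mul, sub_eq_zero] at hconst
  exact hconst.symm
end

section
/- Let k be a field, n ≥ 1, and let μ_1, …, μ_s be positive integers with μ_1 + … + μ_s = n; put m_i = μ_1 + … + μ_i. For t ≥ 1 set λ_t = #{ i : μ_i ≥ t } (the conjugate partition of μ). Let N be a nilpotent endomorphism of the k-vector space k^n such that dim_k ker(N^j) = Σ_{t ≥ 1} min(λ_t, j) for every j ≥ 0. Then there exists exactly one chain of k-subspaces 0 = V_0 ⊆ V_1 ⊆ … ⊆ V_s = k^n with dim_k V_i = m_i for all i and N(V_i) ⊆ V_{i−1} for all 1 ≤ i ≤ s. -/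
namespace Stmt6
set_option linter.unusedSectionVars false


open Finset

variable {r s : ℕ}

/-- number of parts `≥ t` (the conjugate partition of `μ`). -/
def lamf (μ : Fin r → ℕ) (t : ℕ) : ℕ := (Finset.univ.filter (fun i => t ≤ μ i)).card

def tot (μ : Fin r → ℕ) : ℕ := ∑ i, μ i

/-- `Dm μ j` = sum of the `j` largest parts of `μ`. -/
def Dm (μ : Fin r → ℕ) (j : ℕ) : ℕ := ∑ t ∈ Finset.Icc 1 (tot μ), min (lamf μ t) j

/-- `Dd μ j` = `j`-th largest part of `μ`. -/
def Dd (μ : Fin r → ℕ) (j : ℕ) : ℕ :=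
  ((Finset.Icc 1 (tot μ)).filter (fun t => j ≤ lamf μ t)).card

lemma lamf_le (μ : Fin r → ℕ) (t : ℕ) : lamf μ t ≤ r := by
  classical
  simpa [lamf] using (Finset.card_filter_le Finset.univ (fun i => t ≤ μ i))

lemma lamf_anti (μ : Fin r → ℕ) {t t' : ℕ} (h : t ≤ t') : lamf μ t' ≤ lamf μ t := by
  classical
  apply Finset.card_le_card
  intro i hi
  simp only [Finset.mem_filter] at hi ⊢
  exact ⟨hi.1, le_trans h hi.2⟩

lemma le_tot (μ : Fin r → ℕ) (i : Fin r) : μ i ≤ tot μ :=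
  Finset.single_le_sum (fun _ _ => Nat.zero_le _) (Finset.mem_univ i)

lemma lamf_eq_zero (μ : Fin r → ℕ) {t : ℕ} (h : tot μ < t) : lamf μ t = 0 := by
  classical
  rw [lamf, Finset.card_eq_zero, Finset.filter_eq_empty_iff]
  intro i _
  have := le_tot μ i
  omega

lemma Dm_range (μ : Fin r → ℕ) {B : ℕ} (h : tot μ ≤ B) (j : ℕ) :
    ∑ t ∈ Finset.Icc 1 B, min (lamf μ t) j = Dm μ j := by
  classical
  rw [Dm]
  refine (Finset.sum_subset ?_ ?_).symm
  · intro t ht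
    simp only [Finset.mem_Icc] at ht ⊢
    omega
  · intro t ht ht'
    simp only [Finset.mem_Icc] at ht ht'
    have : tot μ < t := by omega
    simp [lamf_eq_zero μ this]

lemma Dd_range (μ : Fin r → ℕ) {B : ℕ} (h : tot μ ≤ B) {j : ℕ} (hj : 1 ≤ j) :
    ((Finset.Icc 1 B).filter (fun t => j ≤ lamf μ t)).card = Dd μ j := by
  classical
  rw [Dd]
  congr 1
  ext t
  simp only [Finset.mem_filter, Finset.mem_Icc]
  constructor
  · rintro ⟨⟨h1, h2⟩, h3⟩
    refine ⟨⟨h1, ?_⟩, h3⟩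
    by_contra hc
    have : lamf μ t = 0 := lamf_eq_zero μ (by omega)
    omega
  · rintro ⟨⟨h1, h2⟩, h3⟩
    exact ⟨⟨h1, by omega⟩, h3⟩

lemma Dm_zero (μ : Fin r → ℕ) : Dm μ 0 = 0 := by simp [Dm]

lemma Dm_succ (μ : Fin r → ℕ) (j : ℕ) : Dm μ (j + 1) = Dm μ j + Dd μ (j + 1) := by
  classical
  rw [Dm, Dm, Dd, Finset.card_filter, ← Finset.sum_add_distrib]
  apply Finset.sum_congr rfl
  intro t _
  by_cases h : j + 1 ≤ lamf μ t <;> simp [h] <;> omega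

lemma Dm_big (μ : Fin r → ℕ) {j : ℕ} (h : r ≤ j) : Dm μ j = tot μ := by
  classical
  have h1 : ∀ t ∈ Finset.Icc 1 (tot μ), min (lamf μ t) j = lamf μ t := by
    intro t _
    have := lamf_le μ t
    omega
  rw [Dm, Finset.sum_congr rfl h1]
  have h2 : ∀ t ∈ Finset.Icc 1 (tot μ), lamf μ t
      = ∑ i : Fin r, (if t ≤ μ i then 1 else 0) := by
    intro t _
    rw [lamf, Finset.card_filter]
  rw [Finset.sum_congr rfl h2, Finset.sum_comm]
  have h3 : ∀ i : Fin r, ∑ t ∈ Finset.Icc 1 (tot μ), (if t ≤ μ i then 1 else 0) = μ i := by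
    intro i
    rw [← Finset.card_filter]
    have : (Finset.Icc 1 (tot μ)).filter (fun t => t ≤ μ i) = Finset.Icc 1 (μ i) := by
      ext t
      simp only [Finset.mem_filter, Finset.mem_Icc]
      have := le_tot μ i
      omega
    rw [this, Nat.card_Icc]
    omega
  rw [Finset.sum_congr rfl (fun i _ => h3 i), tot]

lemma Dm_mono (μ : Fin r → ℕ) {j j' : ℕ} (h : j ≤ j') : Dm μ j ≤ Dm μ j' := by
  classical
  apply Finset.sum_le_sum
  intro t _
  omega

/-- helper: `min a b` as a count. -/
lemma min_eq_card (a b : ℕ) : min a b = ((Finset.Icc 1 a).filter (fun t => t ≤ b)).card := by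
  classical
  have : (Finset.Icc 1 a).filter (fun t => t ≤ b) = Finset.Icc 1 (min a b) := by
    ext t
    simp only [Finset.mem_filter, Finset.mem_Icc]
    omega
  rw [this, Nat.card_Icc]
  omega

section CastSucc

variable (μ : Fin (s + 1) → ℕ)


lemma tot_castSucc : tot μ = tot (fun i : Fin s => μ i.castSucc) + (μ (Fin.last s)) := by
  rw [tot, tot, Fin.sum_univ_castSucc]

lemma lamf_castSucc (t : ℕ) :
    lamf μ t = lamf (fun i : Fin s => μ i.castSucc) t + (if t ≤ (μ (Fin.last s)) then 1 else 0) := by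
  classical
  rw [lamf, lamf, Finset.card_filter, Finset.card_filter, Fin.sum_univ_castSucc]

lemma b_le_s : lamf μ ((μ (Fin.last s)) + 1) ≤ s := by
  have h := lamf_castSucc μ ((μ (Fin.last s)) + 1)
  have h2 := lamf_le (fun i : Fin s => μ i.castSucc) ((μ (Fin.last s)) + 1)
  rw [if_neg (by omega)] at h
  omega

lemma K4 {j : ℕ} (hj : 1 ≤ j) (hjb : j ≤ lamf μ ((μ (Fin.last s)) + 1)) : (μ (Fin.last s)) + 1 ≤ Dd μ j := by
  classical
  have hb1 : 1 ≤ lamf μ ((μ (Fin.last s)) + 1) := le_trans hj hjb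
  -- some part exceeds (μ (Fin.last s)), so tot μ ≥ (μ (Fin.last s)) + 1 + (μ (Fin.last s))... at least (μ (Fin.last s))+1
  have htot : (μ (Fin.last s)) + 1 ≤ tot μ := by
    have : ∃ i, (μ (Fin.last s)) + 1 ≤ μ i := by
      by_contra hc
      push_neg at hc
      have : lamf μ ((μ (Fin.last s)) + 1) = 0 := by
        rw [lamf, Finset.card_eq_zero, Finset.filter_eq_empty_iff]
        intro i _
        exact Nat.not_le.mpr (hc i)
      omega
    obtain ⟨i, hi⟩ := this
    exact le_trans hi (le_tot μ i)
  have hsub : Finset.Icc 1 ((μ (Fin.last s)) + 1) ⊆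
      (Finset.Icc 1 (tot μ)).filter (fun t => j ≤ lamf μ t) := by
    intro t ht
    simp only [Finset.mem_Icc] at ht
    simp only [Finset.mem_filter, Finset.mem_Icc]
    refine ⟨⟨ht.1, by omega⟩, ?_⟩
    exact le_trans hjb (lamf_anti μ ht.2)
  have := Finset.card_le_card hsub
  rw [Nat.card_Icc] at this
  rw [Dd]
  omega

lemma K5 : Dd μ (lamf μ ((μ (Fin.last s)) + 1) + 1) = (μ (Fin.last s)) := by
  classical
  have htot : (μ (Fin.last s)) ≤ tot μ := by rw [tot_castSucc]; omega
  have hfil : (Finset.Icc 1 (tot μ)).filter (fun t => lamf μ ((μ (Fin.last s)) + 1) + 1 ≤ lamf μ t)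
      = Finset.Icc 1 (μ (Fin.last s)) := by
    ext t
    simp only [Finset.mem_filter, Finset.mem_Icc]
    constructor
    · rintro ⟨⟨h1, _⟩, h3⟩
      refine ⟨h1, ?_⟩
      by_contra hc
      have : lamf μ t ≤ lamf μ ((μ (Fin.last s)) + 1) := lamf_anti μ (by omega)
      omega
    · rintro ⟨h1, h2⟩
      refine ⟨⟨h1, by omega⟩, ?_⟩
      have e1 : lamf μ t = lamf (fun i : Fin s => μ i.castSucc) t + 1 := by
        rw [lamf_castSucc μ t, if_pos h2]
      have e2 : lamf μ ((μ (Fin.last s)) + 1) = lamf (fun i : Fin s => μ i.castSucc) ((μ (Fin.last s)) + 1) := by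
        rw [lamf_castSucc μ ((μ (Fin.last s)) + 1), if_neg (by omega)]; omega
      have e3 : lamf (fun i : Fin s => μ i.castSucc) ((μ (Fin.last s)) + 1) ≤ lamf (fun i : Fin s => μ i.castSucc) t := lamf_anti _ (by omega)
      omega
  rw [Dd, hfil, Nat.card_Icc]
  omega

lemma K6 {j : ℕ} (hj : 1 ≤ j) (hjb : j ≤ lamf μ ((μ (Fin.last s)) + 1)) : Dd (fun i : Fin s => μ i.castSucc) j = Dd μ j := by
  classical
  have htot : tot (fun i : Fin s => μ i.castSucc) ≤ tot μ := by rw [tot_castSucc]; omega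
  rw [← Dd_range (fun i : Fin s => μ i.castSucc) htot hj, Dd]
  congr 1
  ext t
  simp only [Finset.mem_filter, Finset.mem_Icc]
  have e1 := lamf_castSucc μ t
  constructor
  · rintro ⟨h1, h2⟩
    refine ⟨h1, by split_ifs at e1 <;> omega⟩
  · rintro ⟨h1, h2⟩
    refine ⟨h1, ?_⟩
    by_cases hc : t ≤ (μ (Fin.last s))
    · have e2 : lamf μ ((μ (Fin.last s)) + 1) = lamf (fun i : Fin s => μ i.castSucc) ((μ (Fin.last s)) + 1) := by
        rw [lamf_castSucc μ ((μ (Fin.last s)) + 1), if_neg (by omega)]; omega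
      have e3 : lamf (fun i : Fin s => μ i.castSucc) ((μ (Fin.last s)) + 1) ≤ lamf (fun i : Fin s => μ i.castSucc) t := lamf_anti _ (by omega)
      omega
    · rw [if_neg hc] at e1
      omega

lemma K7 {j : ℕ} (hjb : lamf μ ((μ (Fin.last s)) + 1) < j) : Dd (fun i : Fin s => μ i.castSucc) j = Dd μ (j + 1) := by
  classical
  have htot : tot (fun i : Fin s => μ i.castSucc) ≤ tot μ := by rw [tot_castSucc]; omega
  have hj : 1 ≤ j := by omega
  rw [← Dd_range (fun i : Fin s => μ i.castSucc) htot hj, Dd]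
  congr 1
  ext t
  simp only [Finset.mem_filter, Finset.mem_Icc]
  have e1 := lamf_castSucc μ t
  constructor
  · rintro ⟨h1, h2⟩
    refine ⟨h1, ?_⟩
    by_cases hc : t ≤ (μ (Fin.last s))
    · rw [if_pos hc] at e1; omega
    · -- lamf (fun i : Fin s => μ i.castSucc) t ≤ lamf μ ((μ (Fin.last s))+1) < j, contradiction with j ≤ lamf (fun i : Fin s => μ i.castSucc) t
      rw [if_neg hc] at e1
      have e3 : lamf μ t ≤ lamf μ ((μ (Fin.last s)) + 1) := lamf_anti _ (by omega)
      omega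
  · rintro ⟨h1, h2⟩
    refine ⟨h1, ?_⟩
    by_cases hc : t ≤ (μ (Fin.last s))
    · rw [if_pos hc] at e1; omega
    · rw [if_neg hc] at e1
      have e3 : lamf μ t ≤ lamf μ ((μ (Fin.last s)) + 1) := lamf_anti _ (by omega)
      omega

end CastSucc

/-- count of `j ∈ [1, J]` with `Dd μ j ≥ t'` equals `lamf μ t'`. -/
lemma C12a (μ : Fin r → ℕ) {J t' : ℕ} (hJ : r ≤ J) (h1 : 1 ≤ t') (h2 : t' ≤ tot μ) :
    ((Finset.Icc 1 J).filter (fun j => t' ≤ Dd μ j)).card = lamf μ t' := by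
  classical
  have key : (Finset.Icc 1 J).filter (fun j => t' ≤ Dd μ j) = Finset.Icc 1 (lamf μ t') := by
    ext j
    simp only [Finset.mem_filter, Finset.mem_Icc]
    constructor
    · rintro ⟨⟨hj1, hj2⟩, h3⟩
      refine ⟨hj1, ?_⟩
      by_contra hc
      push_neg at hc
      -- Dd μ j ≤ t' - 1
      have hsub : (Finset.Icc 1 (tot μ)).filter (fun t => j ≤ lamf μ t)
          ⊆ Finset.Icc 1 (t' - 1) := by
        intro t ht
        simp only [Finset.mem_filter, Finset.mem_Icc] at ht ⊢
        refine ⟨ht.1.1, ?_⟩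
        by_contra hc2
        have : lamf μ t ≤ lamf μ t' := lamf_anti μ (by omega)
        omega
      have := Finset.card_le_card hsub
      rw [Nat.card_Icc] at this
      rw [Dd] at h3
      omega
    · rintro ⟨hj1, hj2⟩
      have hjr : j ≤ J := le_trans hj2 (le_trans (lamf_le μ t') hJ)
      refine ⟨⟨hj1, hjr⟩, ?_⟩
      have hsub : Finset.Icc 1 t' ⊆ (Finset.Icc 1 (tot μ)).filter (fun t => j ≤ lamf μ t) := by
        intro t ht
        simp only [Finset.mem_Icc] at ht
        simp only [Finset.mem_filter, Finset.mem_Icc]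
        exact ⟨⟨ht.1, by omega⟩, le_trans hj2 (lamf_anti μ ht.2)⟩
      have := Finset.card_le_card hsub
      rw [Nat.card_Icc] at this
      rw [Dd]
      omega
  rw [key, Nat.card_Icc]
  omega

/-- the conjugation identity. -/
lemma K8 (μ : Fin r → ℕ) {J t0 : ℕ} (hJ : r ≤ J) (h2 : t0 ≤ tot μ) :
    ∑ i, min t0 (μ i) = ∑ j ∈ Finset.Icc 1 J, min t0 (Dd μ j) := by
  classical
  have lhs : ∑ i, min t0 (μ i) = ∑ t ∈ Finset.Icc 1 t0, lamf μ t := by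
    have h1 : ∀ i : Fin r, min t0 (μ i)
        = ∑ t ∈ Finset.Icc 1 t0, (if t ≤ μ i then 1 else 0) := by
      intro i
      rw [min_eq_card, Finset.card_filter]
    rw [Finset.sum_congr rfl (fun i _ => h1 i), Finset.sum_comm]
    apply Finset.sum_congr rfl
    intro t _
    rw [← Finset.card_filter, lamf]
  have rhs : ∑ j ∈ Finset.Icc 1 J, min t0 (Dd μ j) = ∑ t ∈ Finset.Icc 1 t0, lamf μ t := by
    have h1 : ∀ j, min t0 (Dd μ j)
        = ∑ t ∈ Finset.Icc 1 t0, (if t ≤ Dd μ j then 1 else 0) := by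
      intro j
      rw [min_eq_card, Finset.card_filter]
    rw [Finset.sum_congr rfl (fun j _ => h1 j), Finset.sum_comm]
    apply Finset.sum_congr rfl
    intro t ht
    simp only [Finset.mem_Icc] at ht
    rw [← Finset.card_filter, C12a μ hJ ht.1 (le_trans ht.2 h2)]
  rw [lhs, rhs]



open Submodule Module

universe u v
set_option linter.unusedSectionVars false
variable {k : Type u} [Field k] {V : Type v} [AddCommGroup V] [Module k V]
  [FiniteDimensional k V]

/-- The dimension-counting workhorse: if `f` maps `Y` into `C`, carries `B ≤ Y`,
`D ≤ C`, and `f⁻¹ D ∩ Y ⊆ B`, then `dim Y - dim B ≤ dim C - dim D`. -/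
lemma workhorse (f : V →ₗ[k] V) (Y B C D : Submodule k V) (hBY : B ≤ Y) (hDC : D ≤ C)
    (hfY : ∀ v ∈ Y, f v ∈ C) (hk : ∀ v ∈ Y, f v ∈ D → v ∈ B) :
    finrank k Y + finrank k D ≤ finrank k C + finrank k B := by
  classical
  set D' : Submodule k C := D.comap C.subtype with hD'
  set g : Y →ₗ[k] C ⧸ D' := D'.mkQ.comp (f.restrict hfY) with hg
  have hrank := LinearMap.finrank_range_add_finrank_ker g
  have h1 : finrank k (LinearMap.range g) ≤ finrank k (C ⧸ D') := Submodule.finrank_le _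
  have h2 : finrank k (C ⧸ D') + finrank k D' = finrank k C :=
    Submodule.finrank_quotient_add_finrank _
  have h3 : finrank k D' = finrank k D := (Submodule.comapSubtypeEquivOfLe hDC).finrank_eq
  have h4 : finrank k (LinearMap.ker g) ≤ finrank k B := by
    have hle : LinearMap.ker g ≤ B.comap Y.subtype := by
      intro v hv
      simp only [hg, LinearMap.mem_ker, LinearMap.comp_apply, Submodule.mkQ_apply,
        Submodule.Quotient.mk_eq_zero] at hv
      have : f (v : V) ∈ D := by
        simpa [hD', LinearMap.restrict_apply] using hv
      exact hk _ v.2 this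
    calc finrank k (LinearMap.ker g) ≤ finrank k (B.comap Y.subtype) :=
          Submodule.finrank_mono hle
      _ = finrank k B := (Submodule.comapSubtypeEquivOfLe hBY).finrank_eq
  omega

lemma ker_pow_mono (N : V →ₗ[k] V) {a b : ℕ} (h : a ≤ b) :
    LinearMap.ker (N ^ a) ≤ LinearMap.ker (N ^ b) := by
  intro v hv
  rw [LinearMap.mem_ker] at hv ⊢
  obtain ⟨c, rfl⟩ := Nat.exists_eq_add_of_le h
  rw [add_comm, pow_add, Module.End.mul_apply, hv, map_zero]

lemma mem_ker_succ {N : V →ₗ[k] V} {j : ℕ} {v : V} :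
    v ∈ LinearMap.ker (N ^ (j + 1)) ↔ N v ∈ LinearMap.ker (N ^ j) := by
  rw [LinearMap.mem_ker, LinearMap.mem_ker, pow_succ, Module.End.mul_apply]

lemma range_inf_ker (N : V →ₗ[k] V) (j : ℕ) :
    LinearMap.range N ⊓ LinearMap.ker (N ^ j) = Submodule.map N (LinearMap.ker (N ^ (j + 1))) := by
  ext x
  simp only [Submodule.mem_inf, LinearMap.mem_range, Submodule.mem_map, LinearMap.mem_ker]
  constructor
  · rintro ⟨⟨y, rfl⟩, hx⟩
    exact ⟨y, by rwa [pow_succ, Module.End.mul_apply], rfl⟩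
  · rintro ⟨y, hy, rfl⟩
    exact ⟨⟨y, rfl⟩, by rwa [pow_succ, Module.End.mul_apply] at hy⟩

lemma finrank_range_inf_ker (N : V →ₗ[k] V) (j : ℕ) :
    finrank k (LinearMap.range N ⊓ LinearMap.ker (N ^ j) : Submodule k V)
      + finrank k (LinearMap.ker N)
      = finrank k (LinearMap.ker (N ^ (j + 1))) := by
  rw [range_inf_ker]
  have := LinearMap.finrank_range_add_finrank_ker (N.domRestrict (LinearMap.ker (N ^ (j + 1))))
  rw [LinearMap.range_domRestrict, LinearMap.ker_domRestrict] at this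
  have h2 : finrank k (Submodule.comap (LinearMap.ker (N ^ (j + 1))).subtype (LinearMap.ker N))
      = finrank k (LinearMap.ker N) :=
    (Submodule.comapSubtypeEquivOfLe (by simpa using ker_pow_mono N (Nat.one_le_iff_ne_zero.mpr (by omega)))).finrank_eq
  omega

lemma finrank_comap_subtype (U P : Submodule k V) :
    finrank k (P.comap U.subtype) = finrank k (U ⊓ P : Submodule k V) := by
  rw [← Submodule.map_comap_subtype]
  exact (Submodule.equivMapOfInjective U.subtype U.injective_subtype _).finrank_eq

lemma finrank_map_subtype (U : Submodule k V) (P : Submodule k U) :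
    finrank k (P.map U.subtype) = finrank k P :=
  (Submodule.equivMapOfInjective U.subtype U.injective_subtype _).finrank_eq.symm

/-- telescoping sums of truncated differences for a monotone `g`. -/
lemma tele (g : ℕ → ℕ) (hg : ∀ x, g x ≤ g (x + 1)) (m : ℕ) :
    ∑ x ∈ Finset.range m, (g (x + 1) - g x) = g m - g 0 := by
  induction m with
  | zero => simp
  | succ m ih =>
    rw [Finset.sum_range_succ, ih]
    have h0m : g 0 ≤ g m := by
      clear ih
      induction m with
      | zero => exact le_rfl
      | succ m ih2 => exact le_trans ih2 (hg m)
    have := hg m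
    omega

lemma sum_Icc_one (f : ℕ → ℕ) (m : ℕ) :
    ∑ j ∈ Finset.Icc 1 m, f j = ∑ x ∈ Finset.range m, f (x + 1) := by
  induction m with
  | zero => simp
  | succ m ih => rw [Finset.sum_Icc_succ_top (by omega), ih, Finset.sum_range_succ]


/-! ### prefix sums and more combinatorics -/

lemma Dm_sum {r : ℕ} (μ : Fin r → ℕ) (m : ℕ) :
    Dm μ m = ∑ x ∈ Finset.range m, Dd μ (x + 1) := by
  induction m with
  | zero => simp [Dm_zero]
  | succ m ih => rw [Dm_succ, ih, Finset.sum_range_succ]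

def pref {r : ℕ} (μ : Fin r → ℕ) (c : ℕ) : ℕ :=
  ∑ j ∈ Finset.univ.filter (fun j : Fin r => (j : ℕ) < c), μ j

lemma pref_filter {r : ℕ} (μ : Fin r → ℕ) (c : ℕ) :
    pref μ c = ∑ j : Fin r, if (j : ℕ) < c then μ j else 0 := by
  rw [pref, Finset.sum_filter]

lemma pref_zero {r : ℕ} (μ : Fin r → ℕ) : pref μ 0 = 0 := by
  rw [pref_filter]; simp

lemma pref_big {r : ℕ} (μ : Fin r → ℕ) {c : ℕ} (h : r ≤ c) : pref μ c = tot μ := by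
  rw [pref_filter, tot]
  apply Finset.sum_congr rfl
  intro j _
  rw [if_pos (by omega)]

lemma pref_succ {r : ℕ} (μ : Fin r → ℕ) (i : Fin r) :
    pref μ ((i : ℕ) + 1) = pref μ (i : ℕ) + μ i := by
  classical
  have hfil : (Finset.univ.filter (fun j : Fin r => (j : ℕ) < (i : ℕ) + 1))
      = insert i (Finset.univ.filter (fun j : Fin r => (j : ℕ) < (i : ℕ))) := by
    ext j
    simp only [Finset.mem_filter, Finset.mem_insert, Finset.mem_univ, true_and, Fin.ext_iff]
    omega
  rw [pref, hfil, Finset.sum_insert (by simp), pref]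
  omega

lemma pref_castSucc {s : ℕ} (μ : Fin (s + 1) → ℕ) {c : ℕ} (h : c ≤ s) :
    pref (fun i : Fin s => μ i.castSucc) c = pref μ c := by
  rw [pref_filter, pref_filter, Fin.sum_univ_castSucc
    (f := fun j : Fin (s + 1) => if (j : ℕ) < c then μ j else 0)]
  simp only [Fin.coe_castSucc, Fin.val_last]
  rw [if_neg (by omega)]
  omega

lemma sum_min_castSucc {s : ℕ} (μ : Fin (s + 1) → ℕ) (t0 : ℕ) :
    ∑ i' ∈ Finset.univ.filter (fun i' : Fin (s + 1) => (i' : ℕ) < s), min t0 (μ i')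
      = ∑ i' : Fin s, min t0 (μ i'.castSucc) := by
  rw [Finset.sum_filter, Fin.sum_univ_castSucc
    (f := fun j : Fin (s + 1) => if (j : ℕ) < s then min t0 (μ j) else 0)]
  simp only [Fin.coe_castSucc, Fin.val_last, lt_irrefl, if_false]
  have h2 : ∀ x : Fin s, (if (x : ℕ) < s then min t0 (μ x.castSucc) else 0)
      = min t0 (μ x.castSucc) := fun x => if_pos x.isLt
  rw [Finset.sum_congr rfl (fun x _ => h2 x)]
  omega


/-- purely arithmetic part of the induction step for the upper bound (S). -/
lemma seq_bound (dC dE : ℕ → ℕ) (s t mi : ℕ)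
    (hCmono : ∀ x, dC x ≤ dC (x + 1)) (hEmono : ∀ x, dE x ≤ dE (x + 1))
    (hC0 : dC 0 = 0) (hE0 : dE 0 = 0)
    (hCtop : dC (s + 1) + mi = dE (s + 1))
    (hE1 : ∀ x, dE (x + 2) + dC x ≤ dC (x + 1) + dE (x + 1))
    (hE7 : ∀ x, dC (x + 1) + dE x ≤ dE (x + 1) + dC x) :
    ∑ x ∈ Finset.range (s + 1), min t (dE (x + 1) - dE x)
      ≤ min t mi + ∑ x ∈ Finset.range (s + 1), min t (dC (x + 1) - dC x) := by
  have hB1 : ∑ x ∈ Finset.range (s + 1), min t (dE (x + 1) - dE x)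
      ≤ t + ∑ x ∈ Finset.range (s + 1), min t (dC (x + 1) - dC x) := by
    rw [Finset.sum_range_succ' (fun x => min t (dE (x + 1) - dE x)) s]
    have hp : ∀ x ∈ Finset.range s,
        min t (dE (x + 1 + 1) - dE (x + 1)) ≤ min t (dC (x + 1) - dC x) := by
      intro x _
      have h1 : dE (x + 1 + 1) + dC x ≤ dC (x + 1) + dE (x + 1) := hE1 x
      have h2 := hCmono x
      have h3 := hEmono (x + 1)
      omega
    have h1 := Finset.sum_le_sum hp
    have h2 : ∑ x ∈ Finset.range s, min t (dC (x + 1) - dC x)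
        ≤ ∑ x ∈ Finset.range (s + 1), min t (dC (x + 1) - dC x) :=
      Finset.sum_le_sum_of_subset (Finset.range_subset_range.mpr (by omega))
    have h3 : min t (dE (0 + 1) - dE 0) ≤ t := min_le_left _ _
    omega
  have hB2 : ∑ x ∈ Finset.range (s + 1), min t (dE (x + 1) - dE x)
      ≤ mi + ∑ x ∈ Finset.range (s + 1), min t (dC (x + 1) - dC x) := by
    have hp : ∀ x ∈ Finset.range (s + 1),
        min t (dE (x + 1) - dE x) + (dC (x + 1) - dC x)
          ≤ min t (dC (x + 1) - dC x) + (dE (x + 1) - dE x) := by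
      intro x _
      have h1 := hE7 x
      have h2 := hCmono x
      have h3 := hEmono x
      omega
    have h1 := Finset.sum_le_sum hp
    rw [Finset.sum_add_distrib, Finset.sum_add_distrib] at h1
    have h2 := tele dC hCmono (s + 1)
    have h3 := tele dE hEmono (s + 1)
    omega
  omega

/-! ### the main induction -/

universe u' v'

theorem key {k : Type u'} [Field k] (s : ℕ) :
    ∀ {V : Type v'} [AddCommGroup V] [Module k V] [FiniteDimensional k V]
      (μ : Fin s → ℕ) (N : V →ₗ[k] V),
      (∀ j, finrank k (LinearMap.ker (N ^ j)) = Dm μ j) →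
      finrank k V = tot μ →
      ∃! W : Fin (s + 1) → Submodule k V,
        Monotone W ∧ W 0 = ⊥ ∧ W (Fin.last s) = ⊤ ∧
        (∀ i : Fin (s + 1), finrank k (W i) = pref μ (i : ℕ)) ∧
        (∀ i : Fin s, Submodule.map N (W i.succ) ≤ W i.castSucc) := by
  induction s with
  | zero =>
    intro V _ _ _ μ N hker hdim
    have hdim0 : finrank k V = 0 := by rw [hdim, tot]; simp
    have hallbot : ∀ P : Submodule k V, P = ⊥ := by
      have : Subsingleton V := Module.finrank_zero_iff.mp hdim0
      intro P
      ext x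
      simp [Subsingleton.elim x 0]
    refine ⟨fun _ => ⊥, ⟨monotone_const, rfl, (hallbot ⊤).symm, ?_, fun i => i.elim0⟩, ?_⟩
    · intro i
      have : (i : ℕ) = 0 := by omega
      simp [pref, this]
    · intro Wb _
      funext i
      rw [hallbot (Wb i)]
  | succ s ih =>
    intro V _ _ _ μ N hker hdim
    classical
    set t0 := μ (Fin.last s) with ht0
    set ν : Fin s → ℕ := fun i => μ i.castSucc with hν
    set b := lamf μ (t0 + 1) with hb
    -- combinatorial facts
    have htot : tot μ = tot ν + t0 := tot_castSucc μ
    have hble : b ≤ s := b_le_s μ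
    have hK5 : Dd μ (b + 1) = t0 := K5 μ
    have hDmlow : ∀ j, j ≤ b → Dm ν j = Dm μ j := by
      intro j
      induction j with
      | zero => intro _; rw [Dm_zero, Dm_zero]
      | succ j ihj =>
        intro h
        rw [Dm_succ, Dm_succ, ihj (by omega), K6 μ (by omega) h]
    have hF2D : ∀ j, b ≤ j → Dm ν j + t0 = Dm μ (j + 1) := by
      intro j
      induction j with
      | zero =>
        intro h0
        have hb0 : b = 0 := by omega
        rw [Dm_zero, Dm_succ, Dm_zero, ← hK5, hb0]
      | succ j ihj =>
        intro h
        rcases Nat.lt_or_ge j b with hc | hc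
        · have hbj : b = j + 1 := by omega
          rw [hDmlow (j+1) (by omega), Dm_succ μ (j+1), ← hbj, hK5]
        · have e1 := Dm_succ ν j
          have e2 := Dm_succ μ (j + 1)
          have e3 : Dd ν (j + 1) = Dd μ (j + 1 + 1) :=
            K7 μ (show lamf μ (t0 + 1) < j + 1 by omega)
          have e4 := ihj hc
          omega
    -- the kernel of N^(s+1) is everything
    have hkertop : LinearMap.ker (N ^ (s + 1)) = ⊤ := by
      apply Submodule.eq_top_of_finrank_eq
      rw [hker, Dm_big μ (le_refl (s + 1)), hdim]
    -- the canonical subspace U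
    set U : Submodule k V := LinearMap.ker (N ^ b) ⊔ LinearMap.range N with hU
    have hUstable : ∀ x ∈ U, N x ∈ U := by
      intro x _
      exact Submodule.mem_sup_right ⟨x, rfl⟩
    have hrangeU : LinearMap.range N ≤ U := le_sup_right
    have hUker : ∀ j, finrank k (U ⊓ LinearMap.ker (N ^ j) : Submodule k V) = Dm ν j := by
      intro j
      rcases le_or_gt j b with hj | hj
      · have h1 : LinearMap.ker (N ^ j) ≤ U := le_trans (ker_pow_mono N hj) le_sup_left
        rw [inf_eq_right.mpr h1, hker j, hDmlow j hj]
      · have hbj : b ≤ j := le_of_lt hj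
        have hmod : U ⊓ LinearMap.ker (N ^ j)
            = LinearMap.ker (N ^ b) ⊔ (LinearMap.range N ⊓ LinearMap.ker (N ^ j)) :=
          sup_inf_assoc_of_le _ (ker_pow_mono N hbj)
        have hie := Submodule.finrank_sup_add_finrank_inf_eq (LinearMap.ker (N ^ b))
          (LinearMap.range N ⊓ LinearMap.ker (N ^ j))
        have hinf2 : LinearMap.ker (N ^ b) ⊓ (LinearMap.range N ⊓ LinearMap.ker (N ^ j))
            = LinearMap.range N ⊓ LinearMap.ker (N ^ b) := by
          apply le_antisymm
          · exact le_inf (le_trans inf_le_right inf_le_left) inf_le_left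
          · exact le_inf inf_le_right (le_inf inf_le_left
              (le_trans inf_le_right (ker_pow_mono N hbj)))
        rw [hinf2] at hie
        have e1 := finrank_range_inf_ker N j
        have e2 := finrank_range_inf_ker N b
        have e3 := hker (j + 1)
        have e4 := hker (b + 1)
        have e5 := hker b
        have e6 := Dm_succ μ b
        have e7 := hF2D j hbj
        rw [hmod]
        omega
    have hUdim : finrank k U = tot ν := by
      have h1 : U ⊓ LinearMap.ker (N ^ (s + 1)) = U := by rw [hkertop, inf_top_eq]
      have h2 := hUker (s + 1)
      rw [h1] at h2
      rw [h2]
      exact Dm_big ν (by omega)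
    -- the restricted endomorphism
    set N' : U →ₗ[k] U := N.restrict hUstable with hN'
    have hN'pow : ∀ j, ∀ x ∈ U, (N ^ j) x ∈ U := by
      intro j
      induction j with
      | zero => intro x hx; simpa using hx
      | succ j ihj =>
        intro x hx
        rw [pow_succ, Module.End.mul_apply]
        exact ihj _ (hUstable x hx)
    have hN'ker : ∀ j, finrank k (LinearMap.ker (N' ^ j)) = Dm ν j := by
      intro j
      rw [hN', Module.End.pow_restrict j hUstable (hN'pow j), LinearMap.ker_restrict,
        finrank_comap_subtype, hUker j]
    obtain ⟨W', ⟨hW'mono, hW'0, hW'top, hW'rank, hW'map⟩, hW'uniq⟩ := ih ν N' hN'ker hUdim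
    -- the canonical flag
    set Wc : Fin (s + 2) → Submodule k V :=
      Fin.snoc (fun i : Fin (s + 1) => (W' i).map U.subtype) ⊤ with hWc
    have hWclast : Wc (Fin.last (s + 1)) = ⊤ := by rw [hWc]; simp
    have hWccast : ∀ i : Fin (s + 1), Wc i.castSucc = (W' i).map U.subtype := by
      intro i
      rw [hWc]
      simp
    have hWcip : Wc (Fin.last s).castSucc = U := by
      rw [hWccast, hW'top, Submodule.map_subtype_top]
    refine ⟨Wc, ⟨?_, ?_, hWclast, ?_, ?_⟩, ?_⟩
    · -- monotone
      intro a b' hab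
      induction b' using Fin.lastCases with
      | last => rw [hWclast]; exact le_top
      | cast b' =>
        induction a using Fin.lastCases with
        | last =>
          exfalso
          exact absurd (lt_of_le_of_lt hab (Fin.castSucc_lt_last b')) (lt_irrefl _)
        | cast a' =>
          rw [hWccast, hWccast]
          exact Submodule.map_mono (hW'mono (by
            rwa [Fin.castSucc_le_castSucc_iff] at hab))
    · -- zero
      have h0 : (0 : Fin (s + 2)) = (0 : Fin (s + 1)).castSucc := by simp
      rw [h0, hWccast, hW'0, Submodule.map_bot]
    · -- ranks
      intro i
      induction i using Fin.lastCases with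
      | last =>
        rw [hWclast, finrank_top, hdim, Fin.val_last, pref_big μ (by omega)]
      | cast i =>
        rw [hWccast, finrank_map_subtype, hW'rank i, Fin.coe_castSucc,
          pref_castSucc μ (by omega)]
    · -- maps
      intro i
      induction i using Fin.lastCases with
      | last =>
        rw [Fin.succ_last, hWclast, Submodule.map_top, hWcip]
        exact hrangeU
      | cast i =>
        rw [Fin.succ_castSucc, hWccast i.succ, hWccast i.castSucc]
        rintro x ⟨y, hy, rfl⟩
        obtain ⟨u, hu, rfl⟩ := hy
        exact ⟨N' u, hW'map i (Submodule.mem_map_of_mem hu), rfl⟩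
    · -- uniqueness
      intro Wb hWb
      obtain ⟨hbmono, hb0, hbtop, hbrank, hbmap⟩ := hWb
      have hWbker : ∀ i : Fin (s + 2), Wb i ≤ LinearMap.ker (N ^ (i : ℕ)) := by
        intro i
        induction i using Fin.induction with
        | zero => rw [hb0]; exact bot_le
        | succ i ihh =>
          intro v hv
          have h1 : N v ∈ Wb i.castSucc := hbmap i (Submodule.mem_map_of_mem hv)
          have h2 := ihh h1
          rw [Fin.coe_castSucc] at h2
          rw [Fin.val_succ]
          exact mem_ker_succ.mpr h2
      set ip : Fin (s + 2) := (Fin.last s).castSucc with hip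
      have hrange_wb : LinearMap.range N ≤ Wb ip := by
        have h := hbmap (Fin.last s)
        rwa [Fin.succ_last, hbtop, Submodule.map_top] at h
      set c : ℕ → ℕ :=
        fun x => finrank k (Wb ip ⊓ LinearMap.ker (N ^ x) : Submodule k V) with hcdef
      have hcmono : ∀ x y, x ≤ y → c x ≤ c y := fun x y h =>
        Submodule.finrank_mono (inf_le_inf le_rfl (ker_pow_mono N h))
      have hWbip_rank : finrank k (Wb ip) = pref μ s := by
        have h := hbrank ip
        rwa [hip, Fin.coe_castSucc, Fin.val_last] at h
      have hWbip_ker : Wb ip ≤ LinearMap.ker (N ^ s) := by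
        have h := hWbker ip
        rwa [hip, Fin.coe_castSucc, Fin.val_last] at h
      have hctop : ∀ x, s ≤ x → c x = pref μ s := by
        intro x hx
        have h1 : Wb ip ≤ LinearMap.ker (N ^ x) :=
          le_trans hWbip_ker (ker_pow_mono N hx)
        rw [hcdef]
        simp only []
        rw [inf_eq_left.mpr h1, hWbip_rank]
      have hIa : ∀ x, c (x + 1) + Dm μ x ≤ Dm μ (x + 1) + c x := by
        intro x
        have h := workhorse (LinearMap.id (R := k) (M := V))
          (Wb ip ⊓ LinearMap.ker (N ^ (x + 1))) (Wb ip ⊓ LinearMap.ker (N ^ x))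
          (LinearMap.ker (N ^ (x + 1))) (LinearMap.ker (N ^ x))
          (inf_le_inf le_rfl (ker_pow_mono N (by omega)))
          (ker_pow_mono N (by omega))
          (fun v hv => hv.2)
          (fun v hv hd => ⟨hv.1, hd⟩)
        rw [hker x, hker (x + 1)] at h
        exact h
      have hIb : ∀ x, Dm μ (x + 2) + c x ≤ c (x + 1) + Dm μ (x + 1) := by
        intro x
        have h := workhorse N
          (LinearMap.ker (N ^ (x + 2))) (LinearMap.ker (N ^ (x + 1)))
          (Wb ip ⊓ LinearMap.ker (N ^ (x + 1))) (Wb ip ⊓ LinearMap.ker (N ^ x))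
          (ker_pow_mono N (by omega))
          (inf_le_inf le_rfl (ker_pow_mono N (by omega)))
          (fun v hv => ⟨hrange_wb ⟨v, rfl⟩, mem_ker_succ.mp hv⟩)
          (fun v _ hd => mem_ker_succ.mpr hd.2)
        rw [hker (x + 1), hker (x + 2)] at h
        exact h
      have hS : ∀ i : Fin (s + 2), ∀ t : ℕ,
          ∑ x ∈ Finset.range (s + 1),
              min t (finrank k (Wb i ⊓ LinearMap.ker (N ^ (x + 1)) : Submodule k V)
                - finrank k (Wb i ⊓ LinearMap.ker (N ^ x) : Submodule k V))
            ≤ ∑ i' ∈ Finset.univ.filter (fun i' : Fin (s + 1) => (i' : ℕ) < (i : ℕ)),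
                min t (μ i') := by
        intro i t
        induction i using Fin.induction with
        | zero =>
          have hz : ∀ x ∈ Finset.range (s + 1),
              min t (finrank k (Wb 0 ⊓ LinearMap.ker (N ^ (x + 1)) : Submodule k V)
                - finrank k (Wb 0 ⊓ LinearMap.ker (N ^ x) : Submodule k V)) = 0 := by
            intro x _
            rw [hb0, bot_inf_eq, bot_inf_eq]
            simp
          rw [Finset.sum_eq_zero hz]
          exact Nat.zero_le _
        | succ i ihh =>
          have hfil : Finset.univ.filter (fun i' : Fin (s + 1) => (i' : ℕ) < (i.succ : ℕ))
              = insert i (Finset.univ.filter (fun i' : Fin (s + 1) => (i' : ℕ) < (i.castSucc : ℕ))) := by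
            ext j
            simp only [Finset.mem_filter, Finset.mem_insert, Finset.mem_univ, true_and,
              Fin.val_succ, Fin.coe_castSucc, Fin.ext_iff]
            omega
          rw [hfil, Finset.sum_insert (by simp)]
          have hcle : Wb i.castSucc ≤ LinearMap.ker (N ^ (s + 1)) := by
            refine le_trans (hWbker i.castSucc) (ker_pow_mono N ?_)
            rw [Fin.coe_castSucc]
            omega
          have hele : Wb i.succ ≤ LinearMap.ker (N ^ (s + 1)) := by
            refine le_trans (hWbker i.succ) (ker_pow_mono N ?_)
            rw [Fin.val_succ]
            omega
          have hmain := seq_bound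
            (fun x => finrank k (Wb i.castSucc ⊓ LinearMap.ker (N ^ x) : Submodule k V))
            (fun x => finrank k (Wb i.succ ⊓ LinearMap.ker (N ^ x) : Submodule k V))
            s t (μ i)
            (fun x => Submodule.finrank_mono (inf_le_inf le_rfl (ker_pow_mono N (by omega))))
            (fun x => Submodule.finrank_mono (inf_le_inf le_rfl (ker_pow_mono N (by omega))))
            (by beta_reduce
                rw [pow_zero, Module.End.one_eq_id, LinearMap.ker_id, inf_bot_eq, finrank_bot])
            (by beta_reduce
                rw [pow_zero, Module.End.one_eq_id, LinearMap.ker_id, inf_bot_eq, finrank_bot])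
            (by beta_reduce
                rw [inf_eq_left.mpr hcle, inf_eq_left.mpr hele, hbrank i.castSucc,
                  hbrank i.succ, Fin.coe_castSucc, Fin.val_succ, pref_succ μ i])
            (fun x => workhorse N
              (Wb i.succ ⊓ LinearMap.ker (N ^ (x + 2))) (Wb i.succ ⊓ LinearMap.ker (N ^ (x + 1)))
              (Wb i.castSucc ⊓ LinearMap.ker (N ^ (x + 1))) (Wb i.castSucc ⊓ LinearMap.ker (N ^ x))
              (inf_le_inf le_rfl (ker_pow_mono N (by omega)))
              (inf_le_inf le_rfl (ker_pow_mono N (by omega)))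
              (fun v hv => ⟨hbmap i (Submodule.mem_map_of_mem hv.1), mem_ker_succ.mp hv.2⟩)
              (fun v hv hd => ⟨hv.1, mem_ker_succ.mpr hd.2⟩))
            (fun x => workhorse (LinearMap.id (R := k) (M := V))
              (Wb i.castSucc ⊓ LinearMap.ker (N ^ (x + 1))) (Wb i.castSucc ⊓ LinearMap.ker (N ^ x))
              (Wb i.succ ⊓ LinearMap.ker (N ^ (x + 1))) (Wb i.succ ⊓ LinearMap.ker (N ^ x))
              (inf_le_inf le_rfl (ker_pow_mono N (by omega)))
              (inf_le_inf le_rfl (ker_pow_mono N (by omega)))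
              (fun v hv => ⟨hbmono (Fin.castSucc_le_succ i) hv.1, hv.2⟩)
              (fun v hv hd => ⟨hv.1, hd.2⟩))
          beta_reduce at hmain
          exact le_trans hmain (Nat.add_le_add_left ihh _)
      have hc0 : c 0 = 0 := by
        rw [hcdef]
        beta_reduce
        rw [pow_zero, Module.End.one_eq_id, LinearMap.ker_id, inf_bot_eq, finrank_bot]
      have hτle : ∀ x, c (x + 1) - c x ≤ Dd μ (x + 1) := by
        intro x
        have h1 := hIa x
        have h2 := Dm_succ μ x
        have h3 := hcmono x (x + 1) (by omega)
        omega
      have hσsum : ∑ x ∈ Finset.range (s + 1), Dd μ (x + 1) = tot μ := by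
        rw [← Dm_sum]
        exact Dm_big μ (le_refl _)
      have hcs1 : c (s + 1) = tot ν := by
        rw [hctop (s + 1) (by omega), ← pref_castSucc μ (le_refl s),
          pref_big (fun i => μ i.castSucc) (le_refl s)]
      have hτsum : ∑ x ∈ Finset.range (s + 1), (c (x + 1) - c x) = tot ν := by
        rw [tele c (fun x => hcmono x (x + 1) (by omega)) (s + 1), hc0, hcs1]
        omega
      have hID : ∑ i' : Fin (s + 1), min t0 (μ i')
          = ∑ x ∈ Finset.range (s + 1), min t0 (Dd μ (x + 1)) := by
        rw [← sum_Icc_one (fun j => min t0 (Dd μ j)) (s + 1)]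
        exact K8 μ (le_refl (s + 1)) (le_tot μ (Fin.last s))
      have hcastsum : ∑ i' : Fin (s + 1), min t0 (μ i')
          = (∑ i' ∈ Finset.univ.filter (fun i' : Fin (s + 1) => (i' : ℕ) < s),
              min t0 (μ i')) + t0 := by
        rw [Fin.sum_univ_castSucc (f := fun i' : Fin (s + 1) => min t0 (μ i')),
          sum_min_castSucc μ t0, ← ht0, Nat.min_self]
      have hSip : (∑ x ∈ Finset.range (s + 1), min t0 (c (x + 1) - c x)) + t0
          ≤ ∑ x ∈ Finset.range (s + 1), min t0 (Dd μ (x + 1)) := by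
        have h1 := hS ip t0
        have h2 : ((ip : Fin (s + 2)) : ℕ) = s := by
          rw [hip, Fin.coe_castSucc, Fin.val_last]
        simp only [h2] at h1
        have h3 : ∑ x ∈ Finset.range (s + 1),
            min t0 (finrank k (Wb ip ⊓ LinearMap.ker (N ^ (x + 1)) : Submodule k V)
              - finrank k (Wb ip ⊓ LinearMap.ker (N ^ x) : Submodule k V))
            = ∑ x ∈ Finset.range (s + 1), min t0 (c (x + 1) - c x) :=
          Finset.sum_congr rfl (fun x _ => rfl)
        rw [h3] at h1
        omega
      have hP : ∀ x ∈ Finset.range (s + 1),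
          min t0 (Dd μ (x + 1)) + (c (x + 1) - c x)
            ≤ Dd μ (x + 1) + min t0 (c (x + 1) - c x) := by
        intro x _
        have := hτle x
        omega
      have hsum_eq : ∑ x ∈ Finset.range (s + 1), (min t0 (Dd μ (x + 1)) + (c (x + 1) - c x))
          = ∑ x ∈ Finset.range (s + 1), (Dd μ (x + 1) + min t0 (c (x + 1) - c x)) := by
        have h1 := Finset.sum_le_sum hP
        rw [Finset.sum_add_distrib, Finset.sum_add_distrib] at h1 ⊢
        omega
      have hpt := (Finset.sum_eq_sum_iff_of_le hP).mp hsum_eq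
      have hτeq : ∀ x, x < b → c (x + 1) - c x = Dd μ (x + 1) := by
        intro x hx
        have h1 := hpt x (Finset.mem_range.mpr (by omega))
        have h2 : t0 + 1 ≤ Dd μ (x + 1) := K4 μ (by omega) (by rw [← hb]; omega)
        have h3 := hτle x
        omega
      have hforce : c b = Dm μ b := by
        have h4 := tele c (fun x => hcmono x (x + 1) (by omega)) b
        have h5 : ∑ x ∈ Finset.range b, (c (x + 1) - c x)
            = ∑ x ∈ Finset.range b, Dd μ (x + 1) :=
          Finset.sum_congr rfl (fun x hx => hτeq x (Finset.mem_range.mp hx))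
        have h6 := Dm_sum μ b
        omega
      have hUeq : U = Wb ip := by
        have hkerb_le : LinearMap.ker (N ^ b) ≤ Wb ip := by
          have h1 : Wb ip ⊓ LinearMap.ker (N ^ b) = LinearMap.ker (N ^ b) := by
            apply Submodule.eq_of_le_of_finrank_le inf_le_right
            rw [hker b, ← hforce]
          rw [← h1]
          exact inf_le_left
        apply Submodule.eq_of_le_of_finrank_le (sup_le hkerb_le hrange_wb)
        rw [hUdim, hWbip_rank, ← pref_castSucc μ (le_refl s), pref_big (fun i => μ i.castSucc) (le_refl s)]
      -- now transfer to U and use the inductive uniqueness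
      have hWble : ∀ i : Fin (s + 1), Wb i.castSucc ≤ U := by
        intro i
        rw [hUeq]
        exact hbmono (by
          rw [Fin.castSucc_le_castSucc_iff]
          exact Fin.le_last i)
      set Wb' : Fin (s + 1) → Submodule k U :=
        fun i => (Wb i.castSucc).comap U.subtype with hWb'def
      have hWb'map : ∀ i : Fin (s + 1), (Wb' i).map U.subtype = Wb i.castSucc := by
        intro i
        rw [hWb'def]
        simp only []
        rw [Submodule.map_comap_subtype, inf_eq_right.mpr (hWble i)]
      have hWb'eq : Wb' = W' := by
        apply hW'uniq
        refine ⟨?_, ?_, ?_, ?_, ?_⟩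
        · intro a' b' hab
          exact Submodule.comap_mono (hbmono (by rwa [Fin.castSucc_le_castSucc_iff]))
        · rw [hWb'def]
          simp only []
          rw [Fin.castSucc_zero, hb0, Submodule.comap_bot, Submodule.ker_subtype]
        · rw [hWb'def]
          simp only []
          have hlast : Wb (Fin.last s).castSucc = U := hUeq.symm
          rw [hlast, Submodule.comap_subtype_self]
        · intro i
          have h1 : finrank k ((Wb i.castSucc).comap U.subtype) = finrank k (Wb i.castSucc) :=
            (Submodule.comapSubtypeEquivOfLe (hWble i)).finrank_eq
          rw [hWb'def]
          simp only []
          rw [h1]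
          have h2 := hbrank i.castSucc
          rw [Fin.coe_castSucc] at h2
          rw [h2, pref_castSucc μ (by omega)]
        · intro i
          intro x hx
          obtain ⟨u, hu, rfl⟩ := hx
          have hmem : (u : V) ∈ Wb (i.succ).castSucc := hu
          have h3 : N (u : V) ∈ Wb (i.castSucc).castSucc := by
            have h4 := hbmap i.castSucc
            rw [Fin.succ_castSucc] at h4
            exact h4 (Submodule.mem_map_of_mem hmem)
          have h5 : ((i.castSucc : Fin (s+1)).castSucc : Fin (s+2)) = ((i.castSucc : Fin (s+1)).castSucc) := rfl
          exact h3
      funext i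
      induction i using Fin.lastCases with
      | last => rw [hbtop, hWclast]
      | cast i => rw [← hWb'map i, hWb'eq, hWccast]

end Stmt6

/-- Remark 2.7, uniqueness of the compatible flag: if `N` is a nilpotent endomorphism of
`kⁿ` whose Jordan type is the conjugate partition `λ` of `μ` (expressed by
`dim ker Nʲ = Σₜ min(λₜ, j)`), then there is exactly one chain of subspaces
`0 = V₀ ⊆ V₁ ⊆ … ⊆ V_s = kⁿ` with `dim Vᵢ = μ₁ + … + μᵢ` and `N(Vᵢ) ⊆ V_{i-1}`. -/
theorem stmt_6 (k : Type*) [Field k] (n s : ℕ) (hn : 1 ≤ n)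
    (μ : Fin s → ℕ) (hμpos : ∀ i, 0 < μ i) (hμsum : ∑ i, μ i = n)
    (mμ : ℕ → ℕ)
    (hmμ : ∀ i, mμ i = ∑ j ∈ Finset.univ.filter (fun j : Fin s => (j : ℕ) < i), μ j)
    (lam : ℕ → ℕ)
    (hlam : ∀ t, lam t = (Finset.univ.filter (fun i : Fin s => t ≤ μ i)).card)
    (N : (Fin n → k) →ₗ[k] (Fin n → k)) (hNnil : IsNilpotent N)
    (hNker : ∀ j : ℕ, Module.finrank k (LinearMap.ker (N ^ j))
      = ∑ t ∈ Finset.Icc 1 n, min (lam t) j) :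
    ∃! V : Fin (s + 1) → Submodule k (Fin n → k),
      Monotone V ∧ V 0 = ⊥ ∧ V (Fin.last s) = ⊤ ∧
      (∀ i : Fin (s + 1), Module.finrank k (V i) = mμ i) ∧
      (∀ i : Fin s, Submodule.map N (V i.succ) ≤ V i.castSucc) := by
  classical
  have htot : Stmt6.tot μ = n := hμsum
  have hker' : ∀ j, Module.finrank k (LinearMap.ker (N ^ j)) = Stmt6.Dm μ j := by
    intro j
    rw [hNker j, Finset.sum_congr rfl (fun t _ => by rw [hlam t])]
    exact Stmt6.Dm_range μ (le_of_eq htot) j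
  have hdim' : Module.finrank k (Fin n → k) = Stmt6.tot μ := by
    rw [Module.finrank_fin_fun, htot]
  obtain ⟨W, ⟨h1, h2, h3, h4, h5⟩, h6⟩ := Stmt6.key s μ N hker' hdim'
  refine ⟨W, ⟨h1, h2, h3, ?_, h5⟩, ?_⟩
  · intro i
    rw [hmμ (i : ℕ)]
    exact h4 i
  · intro Wb hWb
    apply h6
    refine ⟨hWb.1, hWb.2.1, hWb.2.2.1, ?_, hWb.2.2.2.2⟩
    intro i
    have h7 := hWb.2.2.2.1 i
    rw [hmμ (i : ℕ)] at h7
    exact h7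
end

section
/- Let p be a prime number, let k be a commutative ring of characteristic p, let n ≥ 1, and let M be an n×n matrix with entries in k⟦X⟧. Define the additive map D : (Fin n → k⟦X⟧) → (Fin n → k⟦X⟧) by (D v)_i = X · (v_i)′ + (M · v)_i, where (v_i)′ is the formal derivative and M · v is matrix–vector multiplication. Then there exists an n×n matrix Ψ with entries in k⟦X⟧ such that (D^[p])(v) − D(v) = Ψ · v for every v (i.e. the map D^[p] − D is k⟦X⟧-linear, given by multiplication by Ψ), and the constant-term matrix Ψ(0) equals M(0)^p − M(0), where M(0) and Ψ(0) denote the matrices obtained by applying the constant-coefficient map entrywise. -/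
/-!
With `θ = X d/dX`, the Leibniz rule `D (f • v) = θ f • v + f • D v` says that the commutator
with `D` acts on multiplication operators `f •` as `θ` acts on `f`. In characteristic `p` the
`p`-fold commutator with `D` is the commutator with `D ^ p` (left and right multiplication by `D`
commute, so the binomial expansion collapses), while `θ ^ p = θ` because `θ` multiplies `X ^ m`
by `m` and `m ^ p = m`. Hence `D ^ p - D` commutes with every `f •`, i.e. it is `k⟦X⟧`-linear.
Modulo `X` the operator `D` acts by `M(0)`, so `D ^ p - D` acts by `M(0) ^ p - M(0)`.
-/

open PowerSeries Matrix

theorem iterate_commutator_prime {A : Type*} [Ring A] {p : ℕ} (hp : p.Prime)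
    (hA : (p : A) = 0) (a b : A) :
    (fun x => a * x - x * a)^[p] b = a ^ p * b - b * a ^ p := by
  set L := LinearMap.mulLeft ℤ a
  set R := LinearMap.mulRight ℤ a
  have hcast : (p : Module.End ℤ A) = 0 := by
    ext x
    simp [nsmul_eq_mul, hA]
  -- `L = (L - R) + R` with commuting summands, so `L ^ p = (L - R) ^ p + R ^ p` as `p = 0`.
  have hpow : (L - R) ^ p = L ^ p - R ^ p := by
    have h := ((LinearMap.commute_mulLeft_right a a).sub_left (Commute.refl R)).add_pow_prime_eq hp
    rw [sub_add_cancel, hcast, zero_mul, zero_mul, zero_mul, add_zero] at h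
    rw [h, add_sub_cancel_right]
  have := LinearMap.congr_fun hpow b
  rwa [Module.End.pow_apply, LinearMap.sub_apply, LinearMap.pow_mulLeft,
    LinearMap.pow_mulRight] at this

namespace PowerSeries

variable {k : Type*} [CommRing k]

noncomputable def eulerDerivation : Derivation k k⟦X⟧ k⟦X⟧ := (X : k⟦X⟧) • derivative k

theorem eulerDerivation_apply (f : k⟦X⟧) : eulerDerivation f = X * derivative k f := rfl

theorem coeff_eulerDerivation (m : ℕ) (f : k⟦X⟧) :
    coeff m (eulerDerivation f) = m * coeff m f := by
  rcases m with _ | m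
  · simp [eulerDerivation_apply]
  · rw [eulerDerivation_apply, coeff_succ_X_mul, coeff_derivative]
    push_cast
    ring

theorem coeff_iterate_eulerDerivation (j m : ℕ) (f : k⟦X⟧) :
    coeff m (eulerDerivation^[j] f) = (m : k) ^ j * coeff m f := by
  induction j with
  | zero => simp
  | succ j ih => rw [Function.iterate_succ_apply', coeff_eulerDerivation, ih, pow_succ', mul_assoc]

theorem iterate_eulerDerivation_char (p : ℕ) [Fact p.Prime] [CharP k p] (f : k⟦X⟧) :
    eulerDerivation^[p] f = eulerDerivation f := by
  ext m
  rw [coeff_iterate_eulerDerivation, coeff_eulerDerivation, ← frobenius_def, map_natCast]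

variable {ι : Type*} [Fintype ι] (M : Matrix ι ι k⟦X⟧)

noncomputable def logConnection : Module.End k (ι → k⟦X⟧) where
  toFun v i := eulerDerivation (v i) + (M *ᵥ v) i
  map_add' u v := by
    funext i
    simp only [Pi.add_apply, map_add, mulVec_add]
    ring
  map_smul' c v := by
    funext i
    simp only [Pi.smul_apply, Derivation.map_smul, mulVec_smul, RingHom.id_apply, smul_add]

theorem logConnection_apply (v : ι → k⟦X⟧) (i : ι) :
    logConnection M v i = eulerDerivation (v i) + (M *ᵥ v) i := rfl

theorem logConnection_smul (f : k⟦X⟧) (v : ι → k⟦X⟧) :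
    logConnection M (f • v) = eulerDerivation f • v + f • logConnection M v := by
  funext i
  simp only [logConnection_apply, Pi.add_apply, Pi.smul_apply, smul_eq_mul, Derivation.leibniz,
    mulVec_smul]
  ring

theorem constantCoeff_comp_logConnection (v : ι → k⟦X⟧) :
    constantCoeff ∘ logConnection M v = M.map constantCoeff *ᵥ (constantCoeff ∘ v) := by
  funext i
  simp [logConnection_apply, eulerDerivation_apply, RingHom.map_mulVec]

theorem constantCoeff_comp_iterate_logConnection [DecidableEq ι] (j : ℕ) (v : ι → k⟦X⟧) :
    constantCoeff ∘ (logConnection M)^[j] v = M.map constantCoeff ^ j *ᵥ (constantCoeff ∘ v) := by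
  induction j with
  | zero => simp
  | succ j ih =>
    rw [Function.iterate_succ_apply', constantCoeff_comp_logConnection, ih, mulVec_mulVec,
      pow_succ']

section CharP

variable (p : ℕ) [Fact p.Prime] [CharP k p]

theorem commute_logConnection_pow_sub_self_smul_one (f : k⟦X⟧) :
    Commute (logConnection M ^ p - logConnection M) (f • 1) := by
  set L := logConnection M
  have hcast : (p : Module.End k (ι → k⟦X⟧)) = 0 := by
    rw [← map_natCast (algebraMap k _), CharP.cast_eq_zero, map_zero]
  have hsemiconj : Function.Semiconj (fun g : k⟦X⟧ => g • (1 : Module.End k (ι → k⟦X⟧)))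
      eulerDerivation (fun b => L * b - b * L) := fun g => by
    ext v : 1
    simp [L, logConnection_smul]
  have hcomm : L ^ p * (f • 1) - (f • 1) * L ^ p = L * (f • 1) - (f • 1) * L := by
    rw [← iterate_commutator_prime Fact.out hcast, ← (hsemiconj.iterate_right p) f,
      iterate_eulerDerivation_char, hsemiconj]
  rw [Commute, SemiconjBy, sub_mul, mul_sub, sub_eq_sub_iff_sub_eq_sub, hcomm]

noncomputable def pCurvature : Module.End k⟦X⟧ (ι → k⟦X⟧) where
  toFun v := (logConnection M ^ p - logConnection M) v
  map_add' := map_add (logConnection M ^ p - logConnection M)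
  map_smul' f v := LinearMap.congr_fun (commute_logConnection_pow_sub_self_smul_one M p f).eq v

theorem pCurvature_apply (v : ι → k⟦X⟧) :
    pCurvature M p v = (logConnection M)^[p] v - logConnection M v := by
  simp [pCurvature, Module.End.pow_apply]

theorem constantCoeff_comp_pCurvature [DecidableEq ι] (v : ι → k⟦X⟧) :
    constantCoeff ∘ pCurvature M p v =
      (M.map constantCoeff ^ p - M.map constantCoeff) *ᵥ (constantCoeff ∘ v) := by
  rw [pCurvature_apply, sub_mulVec, ← constantCoeff_comp_iterate_logConnection,
    ← constantCoeff_comp_logConnection]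
  ext i
  simp

end CharP

end PowerSeries

theorem stmt_9_general (p : ℕ) (hp : p.Prime) (k : Type*) [CommRing k] [CharP k p]
    (n : ℕ) (M : Matrix (Fin n) (Fin n) (PowerSeries k))
    (D : (Fin n → PowerSeries k) → (Fin n → PowerSeries k))
    (hD : ∀ v i, D v i = PowerSeries.X * PowerSeries.derivativeFun (v i) + M.mulVec v i) :
    ∃ Ψ : Matrix (Fin n) (Fin n) (PowerSeries k),
      (∀ v, D^[p] v - D v = Ψ.mulVec v) ∧
      Ψ.map (PowerSeries.constantCoeff (R := k))
        = (M.map (PowerSeries.constantCoeff (R := k))) ^ p - M.map (PowerSeries.constantCoeff (R := k)) := by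
  have : Fact p.Prime := ⟨hp⟩
  obtain rfl : D = logConnection M := funext fun v => funext (hD v)
  refine ⟨LinearMap.toMatrix' (pCurvature M p), fun v => ?_, ?_⟩
  · rw [← toLin'_apply, toLin'_toMatrix', pCurvature_apply]
  · ext i j
    have hsingle : constantCoeff ∘ Pi.single j (1 : k⟦X⟧) = Pi.single j 1 := by
      rw [Function.comp_def, ← Pi.single_op (fun _ => ⇑constantCoeff) (fun _ => map_zero _), map_one]
    simpa [hsingle] using congrFun (constantCoeff_comp_pCurvature M p (Pi.single j 1)) i

/-- Local form of the residue of the `p`-curvature: for `D = x∂ₓ + M` acting on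
`(k⟦X⟧)^n`, the map `D^[p] - D` is `k⟦X⟧`-linear, given by a matrix `Ψ` whose
constant-term matrix is `M(0)^p - M(0)`. -/
theorem stmt_9 (p : ℕ) (hp : p.Prime) (k : Type*) [CommRing k] [CharP k p]
    (n : ℕ) (hn : 1 ≤ n) (M : Matrix (Fin n) (Fin n) (PowerSeries k))
    (D : (Fin n → PowerSeries k) → (Fin n → PowerSeries k))
    (hD : ∀ v i, D v i = PowerSeries.X * PowerSeries.derivativeFun (v i) + M.mulVec v i) :
    ∃ Ψ : Matrix (Fin n) (Fin n) (PowerSeries k),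
      (∀ v, D^[p] v - D v = Ψ.mulVec v) ∧
      Ψ.map (PowerSeries.constantCoeff (R := k))
        = (M.map (PowerSeries.constantCoeff (R := k))) ^ p - M.map (PowerSeries.constantCoeff (R := k)) :=
  stmt_9_general p hp k n M D hD
end

section
/- Let p be a prime number, let R be a commutative ring of characteristic p, and let g ∈ R⟦X⟧. For every natural number m, the coefficient of X^m in the (p−1)-fold iterated formal derivative of g equals −(the coefficient of X^{m+p−1} in g) if p divides m, and equals 0 otherwise. -/
/-!
Differentiating `p - 1` times multiplies the coefficient of `X^(m + p - 1)` by the product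
`(m + 1) ⋯ (m + p - 1)` of `p - 1` consecutive integers. Modulo `p`, this is Wilson's
`(p - 1)! ≡ -1` when `p ∣ m`; otherwise one of the factors is divisible by `p`, since
`m` times the product is a product of `p` consecutive integers, hence divisible by `p!`.
-/

open Nat

theorem Nat.Prime.dvd_succ_ascFactorial_pred {p m : ℕ} (hp : p.Prime) (hm : ¬p ∣ m) :
    p ∣ (m + 1).ascFactorial (p - 1) := by
  have hprod : m * (m + 1).ascFactorial (p - 1) = m.ascFactorial p := by
    rw [succ_ascFactorial, ← ascFactorial_succ, succ_eq_add_one, Nat.sub_add_cancel hp.one_le]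
  have hdvd : p ∣ m * (m + 1).ascFactorial (p - 1) :=
    hprod ▸ (Nat.dvd_factorial hp.pos le_rfl).trans (factorial_dvd_ascFactorial m p)
  exact (hp.dvd_mul.mp hdvd).resolve_left hm

theorem CharP.natCast_factorial_pred {R : Type*} [CommRing R] {p : ℕ} [CharP R p]
    (hp : p.Prime) : ((p - 1)! : R) = -1 := by
  have := Fact.mk hp
  have h := congr_arg (ZMod.castHom dvd_rfl R) (ZMod.wilsons_lemma (p := p))
  rwa [map_natCast, map_neg, map_one] at h

theorem CharP.natCast_succ_ascFactorial_pred {R : Type*} [CommRing R] {p : ℕ} [CharP R p]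
    (hp : p.Prime) (m : ℕ) :
    ((m + 1).ascFactorial (p - 1) : R) = if p ∣ m then -1 else 0 := by
  split_ifs with hm
  -- The cast of `a.ascFactorial k` is a polynomial in `(a : R)`, and `(m + 1 : R) = 1`.
  · have hm1 : ((m + 1 : ℕ) : R) = ((1 : ℕ) : R) := by
      simp [(CharP.cast_eq_zero_iff R p m).mpr hm]
    rw [cast_ascFactorial, hm1, ← cast_ascFactorial, one_ascFactorial,
      CharP.natCast_factorial_pred hp]
  · exact (CharP.cast_eq_zero_iff R p _).mpr (hp.dvd_succ_ascFactorial_pred hm)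

/-- In characteristic `p`, the coefficient of `X^m` in the `(p-1)`-fold iterated formal
derivative of `g ∈ R⟦X⟧` is `-(coefficient of X^{m+p-1} of g)` if `p ∣ m`, and `0` otherwise. -/
theorem stmt_10 (p : ℕ) (hp : p.Prime) (R : Type*) [CommRing R] [CharP R p]
    (g : PowerSeries R) (m : ℕ) :
    PowerSeries.coeff (R := R) m (PowerSeries.derivativeFun^[p - 1] g)
      = if p ∣ m then -(PowerSeries.coeff (R := R) (m + p - 1) g) else 0 := by
  change PowerSeries.coeff m ((PowerSeries.derivative R)^[p - 1] g) = _
  rw [PowerSeries.coeff_iterate_derivative, CharP.natCast_succ_ascFactorial_pred hp,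
    ← Nat.add_sub_assoc hp.one_le]
  split_ifs <;> simp
end

section
/- Let p be a prime number and let R be a commutative ring of characteristic p. Let h ∈ R⟦X⟧ be a formal power series such that the coefficient of X^m in h vanishes whenever p does not divide m. Then there exists g ∈ R⟦X⟧ such that ∂^{p−1}(g) + g^p = h, where ∂^{p−1} denotes the (p−1)-fold iterated formal derivative. -/
/-!
In characteristic `p` the coefficient of `X ^ n` in `∂^{p-1} g` is
`(n + 1) ⋯ (n + p - 1) · g_{n+p-1}`. For `p ∤ n` one of the factors is a multiple of `p`, and
for `n = p m` the product is `(p - 1)! = -1` by Wilson's theorem; moreover `g ^ p` has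
coefficient `g_m ^ p` at `X ^ (p m)` and vanishes off multiples of `p`. So the equation only asks
for `g_{pm+p-1} = g_m ^ p - h_{pm}`, which defines the coefficients recursively as `m < pm+p-1`.
-/

open PowerSeries Finset

theorem PowerSeries.map_frobenius_expand {R : Type*} [CommRing R] (p : ℕ) [ExpChar R p]
    (f : R⟦X⟧) : map (frobenius R p) (expand p (expChar_ne_zero R p) f) = f ^ p :=
  MvPowerSeries.map_frobenius_expand p (expChar_ne_zero R p)

theorem PowerSeries.coeff_mul_pow_expChar {R : Type*} [CommRing R] (p : ℕ) [ExpChar R p]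
    (f : R⟦X⟧) (m : ℕ) : coeff (p * m) (f ^ p) = coeff m f ^ p := by
  rw [← map_frobenius_expand, coeff_map, coeff_expand_mul, frobenius_def]

theorem PowerSeries.coeff_pow_expChar_of_not_dvd {R : Type*} [CommRing R] (p : ℕ) [ExpChar R p]
    (f : R⟦X⟧) {n : ℕ} (hn : ¬ p ∣ n) : coeff n (f ^ p) = 0 := by
  rw [← map_frobenius_expand, coeff_map, coeff_expand_of_not_dvd _ _ _ hn, map_zero]

theorem CharP.cast_factorial_sub_one (R : Type*) [Ring R] (p : ℕ) [Fact p.Prime] [CharP R p] :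
    ((p - 1).factorial : R) = -1 := by
  rw [← map_natCast (ZMod.castHom (dvd_refl p) R), ZMod.wilsons_lemma, map_neg, map_one]

theorem CharP.cast_ascFactorial_mul_add (R : Type*) [CommSemiring R] (p : ℕ) [CharP R p]
    (m n k : ℕ) : ((p * m + n).ascFactorial k : R) = n.ascFactorial k := by
  simp [Nat.ascFactorial_eq_prod_range]

theorem CharP.cast_ascFactorial_eq_zero (R : Type*) [CommSemiring R] {p : ℕ} [CharP R p]
    (hp : p ≠ 0) {n : ℕ} (hn : ¬ p ∣ n) : ((n + 1).ascFactorial (p - 1) : R) = 0 := by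
  have hr : 0 < n % p := Nat.pos_of_ne_zero fun h => hn (Nat.dvd_of_mod_eq_zero h)
  have hrp : n % p < p := Nat.mod_lt n (Nat.pos_of_ne_zero hp)
  rw [Nat.ascFactorial_eq_prod_range, Nat.cast_prod]
  refine prod_eq_zero (i := p - 1 - n % p) (mem_range.2 (by omega)) ?_
  rw [CharP.cast_eq_zero_iff R p]
  exact Dvd.intro (n / p + 1) (by have := Nat.div_add_mod n p; rw [Nat.mul_add]; omega)

theorem exists_seq_forall_apply_eq_of_lt {α : Type*} [Nonempty α] {φ : ℕ → ℕ}
    (hinj : φ.Injective) (hlt : ∀ m, m < φ m) (F : ℕ → α → α) :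
    ∃ a : ℕ → α, ∀ m, a (φ m) = F m (a m) := by
  classical
  let a : ℕ → α := wellFounded_lt.fix fun n rec =>
    if h : ∃ m, φ m = n then F h.choose (rec h.choose ((hlt _).trans_eq h.choose_spec))
    else Classical.arbitrary α
  refine ⟨a, fun m => ?_⟩
  have hm : ∃ k, φ k = φ m := ⟨m, rfl⟩
  rw [show a (φ m) = F hm.choose (a hm.choose) from
    (wellFounded_lt.fix_eq _ _).trans (dif_pos hm), hinj hm.choose_spec]

/-- In characteristic `p`, if the coefficient of `X^m` in `h` vanishes whenever `p ∤ m`,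
then the equation `∂^{p-1}(g) + g^p = h` has a solution `g ∈ R⟦X⟧`. -/
theorem stmt_11 (p : ℕ) (hp : p.Prime) (R : Type*) [CommRing R] [CharP R p]
    (h : PowerSeries R) (hh : ∀ m : ℕ, ¬ p ∣ m → PowerSeries.coeff m h = 0) :
    ∃ g : PowerSeries R, PowerSeries.derivativeFun^[p - 1] g + g ^ p = h := by
  have := Fact.mk hp
  have := ExpChar.prime (R := R) hp
  obtain ⟨a, ha⟩ := exists_seq_forall_apply_eq_of_lt (φ := fun m => p * m + (p - 1))
    (fun m n hmn => by simpa [hp.pos.ne'] using hmn)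
    (fun m => by nlinarith [hp.two_le, Nat.sub_add_cancel hp.one_le])
    (fun m x => x ^ p - coeff (p * m) h)
  refine ⟨mk a, ?_⟩
  change (d⁄dX R)^[p - 1] (mk a) + mk a ^ p = h
  ext n
  rw [map_add, coeff_iterate_derivative]
  by_cases hn : p ∣ n
  · obtain ⟨m, rfl⟩ := hn
    rw [coeff_mul_pow_expChar, coeff_mk, coeff_mk, ha, add_comm, CharP.cast_ascFactorial_mul_add,
      Nat.one_ascFactorial, CharP.cast_factorial_sub_one]
    ring
  · rw [CharP.cast_ascFactorial_eq_zero R hp.ne_zero hn, coeff_pow_expChar_of_not_dvd p _ hn,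
      hh n hn, zero_mul, zero_add]
end
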